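/- arXiv:1503.06527 — 8 statements merged into one kernel-verified Lean document; each statement's English description precedes it below -/
import Mathlib

section
/- Every finite tree T is f'-paintable, where f' assigns 1 to one designated vertex u of T and 2 to every other vertex. -/
/- # Preliminaries: the online list-coloring (painting) game -/

namespace PaintGame

open SimpleGraph

/-- `X` is an independent set of vertices of `G`. -/
def IndepOn {V : Type} (G : SimpleGraph V) (X : Finset V) : Prop :=
  ∀ u ∈ X, ∀ w ∈ X, ¬ G.Adj u w

/-- Decrease the remaining mark-capacity of every vertex in the marked set `M` by one. -/
def decMark {V : Type} [DecidableEq V] (f : V → ℕ) (M : Finset V) : V → ℕ :=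
  fun v => if v ∈ M then f v - 1 else f v

theorem decMark_lt {V : Type} [Fintype V] [DecidableEq V] (f : V → ℕ) (M : Finset V)
    (hne : M.Nonempty) (hf : ∀ v ∈ M, 1 ≤ f v) :
    ∑ v, decMark f M v < ∑ v, f v := by
  obtain ⟨v₀, hv₀⟩ := hne
  apply Finset.sum_lt_sum
  · intro i _
    unfold decMark
    split <;> omega
  · refine ⟨v₀, Finset.mem_univ v₀, ?_⟩
    have := hf v₀ hv₀
    simp only [decMark, if_pos hv₀]
    omega

/-- Painter wins the (unbounded) painting game on `G` from the position in which `U` is the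
set of uncolored vertices and `f v` is the number of further times `v` may be marked.
Each round, Lister marks a nonempty set `M` of uncolored vertices, each of which may still
be marked; Painter then colors an independent subset `X` of `M`.  Painter wins when every
vertex is colored; Painter has lost if some uncolored vertex can no longer be marked. -/
def PaintFrom {V : Type} [Fintype V] [DecidableEq V] (G : SimpleGraph V)
    (f : V → ℕ) (U : Finset V) : Prop :=
  U = ∅ ∨ ((∀ v ∈ U, 1 ≤ f v) ∧
    ∀ M : Finset V, M ⊆ U → (hne : M.Nonempty) → (hf : ∀ v ∈ M, 1 ≤ f v) →
      ∃ X : Finset V, X ⊆ M ∧ IndepOn G X ∧ PaintFrom G (decMark f M) (U \ X))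
termination_by ∑ v, f v
decreasing_by exact decMark_lt f M hne hf

/-- `G` is `f`-paintable: Painter can guarantee that every vertex of `G` gets colored
while no vertex `v` is marked more than `f v` times. -/
def Paintable {V : Type} [Fintype V] [DecidableEq V] (G : SimpleGraph V) (f : V → ℕ) : Prop :=
  PaintFrom G f Finset.univ

/-- Painter wins the painting game on `G` lasting exactly `t` further rounds, where `U`
is the set of uncolored vertices and each vertex `v` must be marked in exactly `f v` of the
remaining rounds.  Each round Lister marks a nonempty set `M` of vertices that can still be
marked (colored vertices may be marked, since the marked sets are the color classes of a
fixed list assignment using exactly `t` colors); Painter colors an independent set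
`X ⊆ M` of uncolored vertices.  At the end, Painter wins if every vertex got colored, or by
default if Lister failed to mark every vertex `v` exactly `f v` times. -/
def PaintFromIn {V : Type} [DecidableEq V] (G : SimpleGraph V) :
    ℕ → (V → ℕ) → Finset V → Prop
  | 0, f, U => U = ∅ ∨ ∃ v, f v ≠ 0
  | (t + 1), f, U =>
      ∀ M : Finset V, M.Nonempty → (∀ v ∈ M, 1 ≤ f v) →
        ∃ X : Finset V, X ⊆ M ∩ U ∧ IndepOn G X ∧
          PaintFromIn G t (decMark f M) (U \ X)

/-- `G` is `[f,t]`-paintable: Painter can guarantee that every vertex gets colored in the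
painting game on `G` lasting exactly `t` rounds, in which Lister must mark each vertex `v`
in exactly `f v` of the `t` (nonempty) marked sets. -/
def PaintableIn {V : Type} [Fintype V] [DecidableEq V]
    (G : SimpleGraph V) (f : V → ℕ) (t : ℕ) : Prop :=
  PaintFromIn G t f Finset.univ

/-- `m(G,f)`: the minimum `t ≥ max {f v : v ∈ V(G)}` for which `G` is not
`[f,t]`-paintable. -/
noncomputable def mval {V : Type} [Fintype V] [DecidableEq V]
    (G : SimpleGraph V) (f : V → ℕ) : ℕ :=
  sInf {t | (∀ v, f v ≤ t) ∧ ¬ PaintableIn G f t}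

/-- `M(G,f)`: the maximum `t` for which `G` is not `[f,t]`-paintable. -/
noncomputable def Mval {V : Type} [Fintype V] [DecidableEq V]
    (G : SimpleGraph V) (f : V → ℕ) : ℕ :=
  sSup {t | ¬ PaintableIn G f t}

/-- `ListerForce G f U c`: in the painting game on `G` (uncolored set `U`, each vertex `v`
markable at most `f v` more times), Lister can force the appearance of an uncolorable vertex
(an uncolored vertex that can no longer be marked) while spending at most `c` in total,
where a round with marked set `M` costs `|M| - 1`. -/
def ListerForce {V : Type} [Fintype V] [DecidableEq V] (G : SimpleGraph V)
    (f : V → ℕ) (U : Finset V) (c : ℕ) : Prop :=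
  (∃ v ∈ U, f v = 0) ∨
    ∃ M : Finset V, M ⊆ U ∧ ∃ hne : M.Nonempty, ∃ hf : ∀ v ∈ M, 1 ≤ f v,
      ∃ c', M.card - 1 + c' ≤ c ∧
        ∀ X : Finset V, X ⊆ M → IndepOn G X →
          ListerForce G (decMark f M) (U \ X) c'
termination_by ∑ v, f v
decreasing_by exact decMark_lt f M hne hf

/-- `q(G,f)`: the minimum total cost `Σᵢ (|Vᵢ| - 1)` that Lister can guarantee while
forcing an uncolorable vertex, over plays in which each vertex `v` is marked at most
`f v` times. -/
noncomputable def qval {V : Type} [Fintype V] [DecidableEq V]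
    (G : SimpleGraph V) (f : V → ℕ) : ℕ :=
  sInf {c | ListerForce G f Finset.univ c}

/- # Graph containments -/

/-- `G` contains an odd cycle. -/
def HasOddCycle {V : Type} (G : SimpleGraph V) : Prop :=
  ∃ (v : V) (c : G.Walk v v), c.IsCycle ∧ Odd c.length

/-- `G` contains a triangle `C₃`. -/
def HasTriangle {V : Type} (G : SimpleGraph V) : Prop :=
  ∃ u v w : V, G.Adj u v ∧ G.Adj v w ∧ G.Adj u w

/-- `G` contains the theta graph `θ_{p,q,r}`: two vertices joined by three internally
disjoint paths with `p`, `q` and `r` edges respectively. -/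
def HasTheta {V : Type} (G : SimpleGraph V) (p q r : ℕ) : Prop :=
  ∃ (u v : V) (P Q R : G.Walk u v),
    P.IsPath ∧ Q.IsPath ∧ R.IsPath ∧
    P.length = p ∧ Q.length = q ∧ R.length = r ∧
    (∀ x, x ∈ P.support → x ∈ Q.support → x = u ∨ x = v) ∧
    (∀ x, x ∈ P.support → x ∈ R.support → x = u ∨ x = v) ∧
    (∀ x, x ∈ Q.support → x ∈ R.support → x = u ∨ x = v)

/-- `G` contains a graph of the form `C_m·P_k·C_n`: two cycles joined by a path, the
cycles being vertex disjoint, except that when the path is trivial (`k = 1`) the two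
cycles share exactly one vertex. -/
def HasDumbbell {V : Type} (G : SimpleGraph V) : Prop :=
  ∃ (a b : V) (c : G.Walk a a) (d : G.Walk b b) (W : G.Walk a b),
    c.IsCycle ∧ d.IsCycle ∧ W.IsPath ∧
    (∀ x, x ∈ c.support → x ∈ d.support → x = a ∧ x = b) ∧
    (∀ x, x ∈ W.support → x ∈ c.support → x = a) ∧
    (∀ x, x ∈ W.support → x ∈ d.support → x = b)

/-- `G` contains a copy of `H` as a (not necessarily induced) subgraph. -/
def ContainsCopy {W V : Type} (H : SimpleGraph W) (G : SimpleGraph V) : Prop :=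
  ∃ φ : H →g G, Function.Injective φ

/-- `G` contains a member of the family `𝔉₃`: some `θ_{p,q,r}` that is not isomorphic to
any `θ_{2,2,2k}`. -/
def ContainsF3 {V : Type} (G : SimpleGraph V) : Prop :=
  ∃ p q r : ℕ, HasTheta G p q r ∧ ∀ k : ℕ, ({p, q, r} : Multiset ℕ) ≠ {2, 2, 2 * k}

/-- `G` contains a member of the family `𝔉₄ = {θ_{2,2,2k} : k ≥ 2}`. -/
def ContainsF4 {V : Type} (G : SimpleGraph V) : Prop :=
  ∃ k : ℕ, 2 ≤ k ∧ HasTheta G 2 2 (2 * k)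

/- # The core of a graph -/

open Classical in
/-- Delete from `S` all vertices having exactly one neighbour (in `G`) inside `S`. -/
noncomputable def coreStep {V : Type} [DecidableEq V] (G : SimpleGraph V)
    (S : Finset V) : Finset V :=
  S.filter fun v => ¬ ((S.filter fun w => G.Adj v w).card = 1)

/-- The vertex set of the core of `G`: iteratively delete all vertices of degree 1. -/
noncomputable def coreSet {V : Type} [Fintype V] [DecidableEq V] (G : SimpleGraph V) :
    Finset V :=
  (coreStep G)^[Fintype.card V] Finset.univ

/-- The core of `G`: the subgraph of `G` obtained by the iterated removal of all
vertices of degree 1. -/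
noncomputable def coreGraph {V : Type} [Fintype V] [DecidableEq V] (G : SimpleGraph V) :
    SimpleGraph ↥((coreSet G : Set V)) :=
  G.induce (coreSet G : Set V)

end PaintGame

open SimpleGraph PaintGame

variable {V : Type} [DecidableEq V] (T : SimpleGraph V) (u : V)

/-- shortest path exists -/
lemma exists_shortest_path (hc : T.Connected) (v : V) :
    ∃ p : T.Walk u v, p.IsPath ∧ p.length = T.dist u v := by
  obtain ⟨p, hp⟩ := hc.exists_walk_length_eq_dist u v
  refine ⟨p.bypass, p.bypass_isPath, le_antisymm ?_ (SimpleGraph.dist_le _)⟩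
  exact hp ▸ p.length_bypass_le

/-- Key construction -/
lemma exists_path_penult (hc : T.Connected) {v w : V} (h : T.Adj v w)
    (hle : T.dist u w ≤ T.dist u v) :
    ∃ p : T.Walk v u, p.IsPath ∧ p.length = T.dist u w + 1 ∧ p.getVert 1 = w := by
  obtain ⟨q, hq, hql⟩ := exists_shortest_path T u hc w
  have hv : v ∉ q.support := by
    intro hv
    have h1 : T.dist u v ≤ (q.takeUntil v hv).length := SimpleGraph.dist_le _
    have h2 : (q.takeUntil v hv).length + (q.dropUntil v hv).length = q.length := by
      have := congr_arg SimpleGraph.Walk.length (q.take_spec hv)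
      rwa [SimpleGraph.Walk.length_append] at this
    have h3 : (q.dropUntil v hv).length = 0 := by omega
    have := SimpleGraph.Walk.eq_of_length_eq_zero h3
    exact h.ne this
  refine ⟨SimpleGraph.Walk.cons h q.reverse, ?_, ?_, ?_⟩
  · exact hq.reverse.cons (by simpa using hv)
  · simp [hql]
  · simp [SimpleGraph.Walk.getVert_cons_succ]

/-- In a tree, a vertex has at most one neighbour closer to the root. -/
lemma parent_unique (hT : T.IsTree) {v w1 w2 : V} (h1 : T.Adj v w1) (h2 : T.Adj v w2)
    (hd1 : T.dist u w1 < T.dist u v) (hd2 : T.dist u w2 < T.dist u v) : w1 = w2 := by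
  obtain ⟨p1, hp1, _, hg1⟩ := exists_path_penult T u hT.isConnected h1 hd1.le
  obtain ⟨p2, hp2, _, hg2⟩ := exists_path_penult T u hT.isConnected h2 hd2.le
  obtain ⟨p, -, hu⟩ := hT.existsUnique_path v u
  rw [← hg1, ← hg2, hu p1 hp1, hu p2 hp2]

/-- In a tree, adjacent vertices have different distances to the root. -/
lemma adj_dist_ne (hT : T.IsTree) {v w : V} (h : T.Adj v w) :
    T.dist u v ≠ T.dist u w := by
  intro he
  obtain ⟨p, hp, hl, -⟩ := exists_path_penult T u hT.isConnected h.symm he.le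
  obtain ⟨q, hq, hql⟩ := exists_shortest_path T u hT.isConnected w
  obtain ⟨r, -, hu⟩ := hT.existsUnique_path w u
  have := (hu p hp).trans (hu q.reverse hq.reverse).symm
  have hlen := congr_arg SimpleGraph.Walk.length this
  rw [hl, SimpleGraph.Walk.length_reverse, hql, he] at hlen
  omega

/-- Painter's strategy: a marked vertex gets coloured iff all of its marked
neighbours closer to the root are uncoloured. -/
def col {V : Type} [DecidableEq V] (T : SimpleGraph V) (u : V) (M : Finset V) (v : V) : Prop :=
  v ∈ M ∧ ∀ w ∈ M, T.Adj v w → T.dist u w < T.dist u v → ¬ col T u M w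
termination_by T.dist u v

lemma paint_main {V : Type} [Fintype V] [DecidableEq V] (T : SimpleGraph V) (hT : T.IsTree)
    (u : V) : ∀ n (f : V → ℕ) (U : Finset V), ∑ v, f v = n →
      (∀ v ∈ U, 1 ≤ f v) →
      (∀ v ∈ U, f v = 1 → ∀ w ∈ U, T.Adj v w → T.dist u w < T.dist u v → False) →
      PaintGame.PaintFrom T f U := by
  intro n
  induction n using Nat.strong_induction_on with
  | _ n IH =>
  intro f U hn h1 h2
  rw [PaintGame.PaintFrom]
  by_cases hU : U = ∅
  · exact Or.inl hU
  refine Or.inr ⟨h1, ?_⟩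
  intro M hMU hne hfM
  classical
  set X := M.filter (fun v => col T u M v) with hX
  have hXM : X ⊆ M := Finset.filter_subset _ _
  have colOf : ∀ v ∈ M, (∀ w ∈ M, T.Adj v w → T.dist u w < T.dist u v → False) →
      col T u M v := by
    intro v hv hw
    rw [col]
    exact ⟨hv, fun w hwM hadj hlt => (hw w hwM hadj hlt).elim⟩
  have notColOf : ∀ v ∈ M, ¬ col T u M v →
      ∃ w ∈ M, T.Adj v w ∧ T.dist u w < T.dist u v ∧ col T u M w := by
    intro v hv hnc
    rw [col] at hnc
    push_neg at hnc
    exact hnc hv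
  refine ⟨X, hXM, ?_, ?_⟩
  · intro a ha b hb hadj
    obtain ⟨haM, hca⟩ := Finset.mem_filter.mp ha
    obtain ⟨hbM, hcb⟩ := Finset.mem_filter.mp hb
    rcases lt_trichotomy (T.dist u a) (T.dist u b) with hl | hl | hl
    · rw [col] at hcb; exact hcb.2 a haM hadj.symm hl hca
    · exact adj_dist_ne T u hT hadj hl
    · rw [col] at hca; exact hca.2 b hbM hadj hl hcb
  · apply IH (∑ v, PaintGame.decMark f M v)
      (by rw [← hn]; exact PaintGame.decMark_lt f M hne hfM) _ _ rfl
    · intro v hv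
      obtain ⟨hvU, hvX⟩ := Finset.mem_sdiff.mp hv
      unfold PaintGame.decMark
      by_cases hvM : v ∈ M
      · rw [if_pos hvM]
        rcases Nat.lt_or_ge (f v) 2 with h | h
        · have hf1 : f v = 1 := le_antisymm (by omega) (h1 v hvU)
          have hc : col T u M v :=
            colOf v hvM (fun w hwM hadj hlt => h2 v hvU hf1 w (hMU hwM) hadj hlt)
          exact absurd (Finset.mem_filter.mpr ⟨hvM, hc⟩) hvX
        · omega
      · rw [if_neg hvM]; exact h1 v hvU
    · intro v hv hf1 w hw hadj hlt
      obtain ⟨hvU, hvX⟩ := Finset.mem_sdiff.mp hv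
      obtain ⟨hwU, hwX⟩ := Finset.mem_sdiff.mp hw
      by_cases hvM : v ∈ M
      · have hnc : ¬ col T u M v := fun hc => hvX (Finset.mem_filter.mpr ⟨hvM, hc⟩)
        obtain ⟨p, hpM, hpadj, hplt, hpc⟩ := notColOf v hvM hnc
        have hwp : w = p := parent_unique T u hT hadj hpadj hlt hplt
        exact hwX (hwp ▸ Finset.mem_filter.mpr ⟨hpM, hpc⟩)
      · have hfv : f v = 1 := by
          unfold PaintGame.decMark at hf1; rwa [if_neg hvM] at hf1
        exact h2 v hvU hfv w hwU hadj hlt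

/-- Lemma `tree`.  Every finite tree `T` is `f'`-paintable, where `f'`
assigns `1` to one designated vertex `u` of `T` and `2` to every other vertex. -/
theorem tree_paintable {V : Type} [Fintype V] [DecidableEq V] (T : SimpleGraph V)
    (hT : T.IsTree) (u : V) :
    PaintGame.Paintable T (fun v => if v = u then 1 else 2) := by
  
  have h2 : ∀ v ∈ (Finset.univ : Finset V), (fun v => if v = u then 1 else 2) v = 1 →
      ∀ w ∈ (Finset.univ : Finset V), T.Adj v w → T.dist u w < T.dist u v → False := by
    intro v _ hv1 w _ hadj hlt
    have hvu : v = u := by by_contra hne; simp [hne] at hv1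
    subst hvu
    rw [SimpleGraph.dist_self] at hlt
    omega
  exact paint_main T hT u _ _ _ rfl (fun v _ => by by_cases h : v = u <;> simp [h]) h2
end

section
/- Let n ≥ 3 be odd. The odd cycle C_n is not [2,t]-paintable if and only if 2 ≤ t ≤ n. -/
open SimpleGraph PaintGame

/-!
For `2 ≤ t ≤ n` Lister marks every vertex in the first round. As `C_n` is not bipartite, two
adjacent vertices `u, w` stay uncolored; in the second round he marks every vertex outside a set
`S` of `t - 2` vertices avoiding `u` and `w`. One of `u, w` is then uncolored with no marks left,
and the last `t - 2` rounds mark the vertices of `S` one at a time.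

For `t ≤ 1` some vertex cannot be marked twice, so Painter wins by default. For `t > n`: if the
first round marks every vertex, Painter waits, colors the vertex of every singleton round, and
the first round marking two vertices leaves fewer marks than rounds. Otherwise he orders the
cycle starting from the first vertex `a` of a run of marked vertices and colors greedily in this
order; then every uncolored vertex has fewer uncolored earlier neighbours than marks left, and
greedy coloring preserves this in every later round.
-/

namespace PaintGame

open Finset

section General

variable {V : Type} (G : SimpleGraph V)

theorem indepOn_empty : IndepOn G ∅ := by
  simp [IndepOn]

theorem indepOn_of_subset_singleton {X : Finset V} {a : V} (h : X ⊆ {a}) : IndepOn G X := by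
  intro u hu w hw
  rw [mem_singleton.1 (h hu), mem_singleton.1 (h hw)]
  exact G.irrefl

variable [DecidableEq V]

theorem IndepOn.insert {X : Finset V} {a : V} (hX : IndepOn G X) (ha : ∀ x ∈ X, ¬ G.Adj a x) :
    IndepOn G (insert a X) := by
  intro u hu w hw
  rw [mem_insert] at hu hw
  rcases hu with rfl | hu <;> rcases hw with rfl | hw
  · exact G.irrefl
  · exact ha w hw
  · exact fun h => ha u hu h.symm
  · exact hX u hu w hw

theorem paintFromIn_of_exists_lt {s : ℕ} {g : V → ℕ} (U : Finset V) (h : ∃ v, s < g v) :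
    PaintFromIn G s g U := by
  induction s generalizing g U with
  | zero => exact Or.inr (h.imp fun v hv => by omega)
  | succ s ih =>
    intro M _ _
    refine ⟨∅, empty_subset _, indepOn_empty G, ih _ ?_⟩
    obtain ⟨v, hv⟩ := h
    exact ⟨v, by unfold decMark; split <;> omega⟩

theorem not_paintFromIn_card_of_notMem (S : Finset V) {U : Finset V} {v : V} (hvU : v ∈ U)
    (hvS : v ∉ S) : ¬ PaintFromIn G S.card (fun x => if x ∈ S then 1 else 0) U := by
  induction S using Finset.induction_on generalizing U with
  | empty =>
    rintro (rfl | ⟨_, h⟩)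
    · exact notMem_empty v hvU
    · simp at h
  | insert a S ha ih =>
    rw [mem_insert, not_or] at hvS
    rw [card_insert_of_notMem ha]
    intro h
    obtain ⟨X, hX, -, hnext⟩ := h {a} (singleton_nonempty a) (by simp)
    have hvX : v ∉ X := fun hvX => hvS.1 (mem_singleton.1 (mem_of_mem_inter_left (hX hvX)))
    refine ih (mem_sdiff.2 ⟨hvU, hvX⟩) hvS.2 ?_
    convert hnext using 1
    funext x
    by_cases hxa : x = a
    · simp [decMark, hxa, ha]
    · simp [decMark, hxa]

theorem exists_adj_notMem_of_not_colorable_two (hG : ¬ G.Colorable 2) {X : Finset V}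
    (hX : IndepOn G X) : ∃ u w, u ∉ X ∧ w ∉ X ∧ G.Adj u w := by
  by_contra! h
  let c : G.Coloring Bool := Coloring.mk (fun v => decide (v ∈ X)) fun {u w} huw => by
    by_cases hu : u ∈ X <;> by_cases hw : w ∈ X
    · exact absurd huw (hX u hu w hw)
    · simp [hu, hw]
    · simp [hu, hw]
    · exact absurd huw (h u w hu hw)
  exact hG (by simpa using c.colorable)

variable [DecidableRel G.Adj]

theorem exists_indepOn_subset_forall_exists_adj {ι : V → ℕ} (hι : Function.Injective ι)
    (M : Finset V) :
    ∃ X ⊆ M, IndepOn G X ∧ ∀ w ∈ M \ X, ∃ x ∈ X, G.Adj w x ∧ ι x < ι w := by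
  induction M using Finset.induction_on_max_value ι with
  | empty => exact ⟨∅, subset_rfl, indepOn_empty G, by simp⟩
  | insert a M haM hmax ih =>
    obtain ⟨X, hXM, hX, hdom⟩ := ih
    by_cases hadj : ∃ x ∈ X, G.Adj a x
    · refine ⟨X, hXM.trans (subset_insert a M), hX, fun w hw => ?_⟩
      obtain ⟨hw, hwX⟩ := mem_sdiff.1 hw
      rcases mem_insert.1 hw with rfl | hw
      · obtain ⟨x, hxX, hwx⟩ := hadj
        have hxw : ι x ≠ ι w := fun h => haM (hι h ▸ hXM hxX)
        exact ⟨x, hxX, hwx, lt_of_le_of_ne (hmax x (hXM hxX)) hxw⟩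
      · exact hdom w (mem_sdiff.2 ⟨hw, hwX⟩)
    · push Not at hadj
      refine ⟨insert a X, insert_subset_insert a hXM, hX.insert G hadj, fun w hw => ?_⟩
      rw [insert_sdiff_insert] at hw
      exact (hdom w (sdiff_subset_sdiff subset_rfl (subset_insert a X) hw)).imp
        fun x hx => ⟨mem_insert_of_mem hx.1, hx.2⟩

def earlierNeighbors (ι : V → ℕ) (U : Finset V) (v : V) : Finset V :=
  {w ∈ U | G.Adj v w ∧ ι w < ι v}

theorem card_earlierNeighbors_sdiff_lt_decMark {ι g : V → ℕ} {U M X : Finset V} {v : V}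
    (hv : (earlierNeighbors G ι U v).card < g v)
    (hX : v ∈ M → ∃ x ∈ earlierNeighbors G ι U v, x ∈ X) :
    (earlierNeighbors G ι (U \ X) v).card < decMark g M v := by
  have hsub : earlierNeighbors G ι (U \ X) v ⊆ earlierNeighbors G ι U v :=
    filter_subset_filter _ sdiff_subset
  by_cases hvM : v ∈ M
  · obtain ⟨x, hx, hxX⟩ := hX hvM
    have hssub : earlierNeighbors G ι (U \ X) v ⊂ earlierNeighbors G ι U v :=
      (ssubset_iff_of_subset hsub).2
        ⟨x, hx, fun h => (mem_sdiff.1 (mem_filter.1 h).1).2 hxX⟩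
    have := card_lt_card hssub
    simp only [decMark, if_pos hvM]
    omega
  · have := card_le_card hsub
    simp only [decMark, if_neg hvM]
    omega

theorem paintFromIn_of_card_earlierNeighbors_lt {ι : V → ℕ} (hι : Function.Injective ι)
    {s : ℕ} {g : V → ℕ} {U : Finset V}
    (h : ∀ v ∈ U, (earlierNeighbors G ι U v).card < g v) :
    PaintFromIn G s g U := by
  induction s generalizing g U with
  | zero =>
    rcases U.eq_empty_or_nonempty with hU | ⟨v, hv⟩
    · exact Or.inl hU
    · exact Or.inr ⟨v, by have := h v hv; omega⟩
  | succ s ih =>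
    intro M _ _
    obtain ⟨X, hXM, hX, hdom⟩ := exists_indepOn_subset_forall_exists_adj G hι (M ∩ U)
    refine ⟨X, hXM, hX, ih fun v hv => ?_⟩
    obtain ⟨hvU, hvX⟩ := mem_sdiff.1 hv
    refine card_earlierNeighbors_sdiff_lt_decMark G (h v hvU) fun hvM => ?_
    obtain ⟨x, hxX, hvx, hlt⟩ := hdom v (mem_sdiff.2 ⟨mem_inter.2 ⟨hvM, hvU⟩, hvX⟩)
    exact ⟨x, mem_filter.2 ⟨(mem_inter.1 (hXM hxX)).2, hvx, hlt⟩, hxX⟩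

end General

section Counting

variable {V : Type} [Fintype V] [DecidableEq V] (G : SimpleGraph V)

theorem sum_decMark_add_card {g : V → ℕ} {M : Finset V} (hM : ∀ v ∈ M, 1 ≤ g v) :
    ∑ v, decMark g M v + M.card = ∑ v, g v := by
  have hcard : M.card = ∑ v, if v ∈ M then 1 else 0 := by simp
  rw [hcard, ← sum_add_distrib]
  refine sum_congr rfl fun v _ => ?_
  by_cases hv : v ∈ M
  · simp only [decMark, if_pos hv]
    have := hM v hv
    omega
  · simp [decMark, hv]

theorem paintFromIn_of_sum_lt {s : ℕ} {g : V → ℕ} (U : Finset V) (h : ∑ v, g v < s) :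
    PaintFromIn G s g U := by
  induction s generalizing g U with
  | zero => omega
  | succ s ih =>
    intro M hne hM
    refine ⟨∅, empty_subset _, indepOn_empty G, ih _ ?_⟩
    have := sum_decMark_add_card hM
    have := hne.card_pos
    omega

theorem paintFromIn_of_sum_le {s : ℕ} {g : V → ℕ} {U : Finset V} (hU : ∀ v ∈ U, 1 ≤ g v)
    (h : ∑ v, g v ≤ s) : PaintFromIn G s g U := by
  induction s generalizing g U with
  | zero =>
    refine Or.inl (eq_empty_of_forall_notMem fun v hv => ?_)
    have := single_le_sum (fun v _ => Nat.zero_le (g v)) (mem_univ v)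
    have := hU v hv
    omega
  | succ s ih =>
    intro M hne hM
    have hsum := sum_decMark_add_card hM
    rcases hne.exists_eq_singleton_or_nontrivial with ⟨a, rfl⟩ | hM2
    · refine ⟨{a} ∩ U, subset_rfl, indepOn_of_subset_singleton G inter_subset_left,
        ih (fun v hv => ?_) (by simp only [card_singleton] at hsum; omega)⟩
      obtain ⟨hvU, hva⟩ := mem_sdiff.1 hv
      have hva : v ≠ a := fun h => hva (mem_inter.2 ⟨mem_singleton.2 h, hvU⟩)
      simpa [decMark, hva] using hU v hvU
    · have := one_lt_card_iff_nontrivial.2 hM2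
      exact ⟨∅, empty_subset _, indepOn_empty G, paintFromIn_of_sum_lt G _ (by omega)⟩

theorem not_paintableIn_two_of_not_colorable (hG : ¬ G.Colorable 2) {t : ℕ} (h2 : 2 ≤ t)
    (ht : t ≤ Fintype.card V) : ¬ PaintableIn G (fun _ => 2) t := by
  intro hpaint
  obtain ⟨k, rfl⟩ : ∃ k, t = k + 2 := ⟨t - 2, by omega⟩
  have : Nonempty V := Fintype.card_pos_iff.1 (by omega)
  obtain ⟨X₁, -, hX₁, hpaint₁⟩ := hpaint univ univ_nonempty (by simp)
  obtain ⟨u, w, hu, hw, huw⟩ := exists_adj_notMem_of_not_colorable_two G hG hX₁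
  obtain ⟨S, hS, rfl⟩ : ∃ S ⊆ univ \ {u, w}, S.card = k := by
    refine exists_subset_card_eq ?_
    rw [card_sdiff_of_subset (subset_univ _), card_pair huw.ne, card_univ]
    omega
  have huS : u ∉ S := fun h => by simpa using hS h
  have hwS : w ∉ S := fun h => by simpa using hS h
  obtain ⟨X₂, -, hX₂, hpaint₂⟩ :=
    hpaint₁ Sᶜ ⟨u, mem_compl.2 huS⟩ (by simp [decMark])
  have hmarks :
      decMark (decMark (fun _ => 2) univ) Sᶜ = fun x => if x ∈ S then 1 else 0 := by
    funext x
    by_cases hx : x ∈ S <;> simp [decMark, hx]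
  rw [hmarks] at hpaint₂
  by_cases hu₂ : u ∈ X₂
  · have hw₂ : w ∉ X₂ := fun h => hX₂ u hu₂ w h huw
    exact not_paintFromIn_card_of_notMem G S (by simp [hw, hw₂]) hwS hpaint₂
  · exact not_paintFromIn_card_of_notMem G S (by simp [hu, hu₂]) huS hpaint₂

end Counting

section Cycle

theorem cycleGraph_not_colorable_two {n : ℕ} (hn : 2 ≤ n) (hodd : Odd n) :
    ¬ (cycleGraph n).Colorable 2 := fun h => by
  have := h.chromaticNumber_le
  rw [chromaticNumber_cycleGraph_of_odd n hn hodd] at this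
  norm_num at this

variable {n : ℕ} [NeZero n]

theorem eq_sub_one_or_eq_add_one_of_cycleGraph_adj {u v : Fin n} (h : (cycleGraph n).Adj u v) :
    v = u - 1 ∨ v = u + 1 := by
  obtain _ | _ | m := n
  · exact u.elim0
  · exact absurd h cycleGraph_one_adj
  · rcases cycleGraph_adj.1 h with h | h
    · exact Or.inl (by rw [← h, sub_sub_cancel])
    · exact Or.inr (by rw [← h, add_sub_cancel])

theorem add_one_eq_of_val_sub_lt {a v : Fin n} (h : (v + 1 - a).val < (v - a).val) :
    v + 1 = a := by
  obtain ⟨m, rfl⟩ : ∃ m, n = m + 1 := ⟨n - 1, (Nat.sub_add_cancel NeZero.one_le).symm⟩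
  rw [add_sub_right_comm, Fin.val_add_one] at h
  split_ifs at h with hlast
  · rw [← sub_eq_zero, add_sub_right_comm, hlast, Fin.last_add_one]
  · omega

theorem exists_mem_sub_one_notMem {M : Finset (Fin n)} (hne : M.Nonempty)
    (hM : M ≠ univ) : ∃ a ∈ M, a - 1 ∉ M := by
  obtain ⟨w, hw⟩ : ∃ w, w ∉ M := by
    by_contra! h
    exact hM (eq_univ_of_forall h)
  obtain ⟨a, haM, hmin⟩ := M.exists_min_image (fun v => (v - w).val) hne
  refine ⟨a, haM, fun ha => ?_⟩
  have hsub : a - w ≠ 0 := sub_ne_zero.2 (ne_of_mem_of_not_mem haM hw)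
  have := hmin _ ha
  rw [sub_right_comm, Fin.val_sub_one_of_ne_zero hsub] at this
  have := Fin.val_ne_zero_iff.2 hsub
  omega

theorem exists_indepOn_cycleGraph_forall_paintFromIn {M : Finset (Fin n)} (hne : M.Nonempty)
    (hM : M ≠ univ) : ∃ X ⊆ M, IndepOn (cycleGraph n) X ∧
      ∀ s, PaintFromIn (cycleGraph n) s (decMark (fun _ => 2) M) (univ \ X) := by
  obtain ⟨a, haM, ha⟩ := exists_mem_sub_one_notMem hne hM
  set ι : Fin n → ℕ := fun v => (v - a).val
  have hι : Function.Injective ι := fun x y h => sub_left_injective (Fin.ext h)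
  obtain ⟨X, hXM, hX, hdom⟩ := exists_indepOn_subset_forall_exists_adj (cycleGraph n) hι M
  have haX : a ∈ X := by
    by_contra h
    obtain ⟨x, -, -, hx⟩ := hdom a (mem_sdiff.2 ⟨haM, h⟩)
    simp [ι] at hx
  -- `v + 1` precedes `v` only when `v + 1 = a`, and `a` is colored
  have hback : ∀ v, earlierNeighbors (cycleGraph n) ι (univ \ X) v ⊆ {v - 1} := by
    intro v w hw
    obtain ⟨hwX, hvw, hlt⟩ := mem_filter.1 hw
    rcases eq_sub_one_or_eq_add_one_of_cycleGraph_adj hvw with rfl | rfl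
    · exact mem_singleton_self _
    · exact absurd (add_one_eq_of_val_sub_lt hlt ▸ haX) (mem_sdiff.1 hwX).2
  refine ⟨X, hXM, hX, fun s => paintFromIn_of_card_earlierNeighbors_lt _ hι fun v hv => ?_⟩
  by_cases hvM : v ∈ M
  · obtain ⟨x, hxX, hvx, hlt⟩ := hdom v (mem_sdiff.2 ⟨hvM, (mem_sdiff.1 hv).2⟩)
    have hx : x = v - 1 := by
      rcases eq_sub_one_or_eq_add_one_of_cycleGraph_adj hvx with rfl | rfl
      · rfl
      · have hva : v = a - 1 := by rw [← add_one_eq_of_val_sub_lt hlt, add_sub_cancel_right]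
        exact absurd (hva ▸ hvM) ha
    have hempty : earlierNeighbors (cycleGraph n) ι (univ \ X) v = ∅ := by
      refine eq_empty_of_forall_notMem fun w hw => ?_
      have := mem_singleton.1 (hback v hw)
      exact (mem_sdiff.1 (mem_filter.1 hw).1).2 (this ▸ hx ▸ hxX)
    simp [hempty, decMark, hvM]
  · have := (card_le_card (hback v)).trans (card_singleton _).le
    simp only [decMark, if_neg hvM]
    omega

theorem cycleGraph_paintableIn_two_of_lt {t : ℕ} (ht : n < t) :
    PaintableIn (cycleGraph n) (fun _ => 2) t := by
  obtain ⟨s, rfl⟩ : ∃ s, t = s + 1 := ⟨t - 1, by omega⟩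
  intro M hne _
  by_cases hM : M = univ
  · subst hM
    refine ⟨∅, empty_subset _, indepOn_empty _,
      paintFromIn_of_sum_le _ (by simp [decMark]) ?_⟩
    simp only [decMark, mem_univ, if_true, sum_const, card_univ, Fintype.card_fin, smul_eq_mul]
    omega
  · obtain ⟨X, hXM, hX, hpaint⟩ := exists_indepOn_cycleGraph_forall_paintFromIn hne hM
    exact ⟨X, subset_inter hXM (subset_univ X), hX, hpaint s⟩

end Cycle

end PaintGame

/-- Theorem `cycleTh`.  Let `n ≥ 3` be odd.  The odd cycle `C_n` is not
`[2,t]`-paintable if and only if `2 ≤ t ≤ n`. -/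
theorem oddCycle_not_paintableIn_iff (n : ℕ) (hn : 3 ≤ n) (hodd : Odd n) (t : ℕ) :
    ¬ PaintGame.PaintableIn (SimpleGraph.cycleGraph n) (fun _ => 2) t ↔ 2 ≤ t ∧ t ≤ n := by
  have : NeZero n := ⟨by omega⟩
  refine ⟨fun hnot => ?_, fun ⟨h2, ht⟩ => ?_⟩
  · by_contra ht
    rcases not_and_or.1 ht with ht | ht
    · exact hnot (paintFromIn_of_exists_lt _ _ ⟨0, by omega⟩)
    · exact hnot (cycleGraph_paintableIn_two_of_lt (by omega))
  · exact not_paintableIn_two_of_not_colorable _ (cycleGraph_not_colorable_two (by omega) hodd)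
      h2 (by simpa using ht)
end

section
/- Suppose the game (G,f) contains (H,h) with V(G)\V(H) nonempty, and let K = max{f(v) : v ∈ V(G)\V(H)}. If H is not [h,t]-paintable, then G is not [f,k]-paintable for every integer k with max{t,K} ≤ k ≤ t + Σ_{v ∈ V(G)\V(H)} f(v). In particular, m(G,f) ≤ max{K, m(H,h)} and M(G,f) ≥ M(H,h) + Σ_{v ∈ V(G)\V(H)} f(v). -/
open SimpleGraph PaintGame

namespace PaintGame

open Finset

lemma IndepOn.comap {V W : Type} {G : SimpleGraph V} {H : SimpleGraph W} (φ : H →g G)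
    {X : Finset V} (hX : IndepOn G X) {Y : Finset W} (hY : ∀ w ∈ Y, φ w ∈ X) :
    IndepOn H Y :=
  fun u hu w hw huw => hX _ (hY u hu) _ (hY w hw) (φ.map_adj huw)

section Marking

variable {V : Type} [DecidableEq V]

lemma decMark_of_mem {f : V → ℕ} {M : Finset V} {v : V} (hv : v ∈ M) :
    decMark f M v = f v - 1 :=
  if_pos hv

lemma decMark_of_notMem {f : V → ℕ} {M : Finset V} {v : V} (hv : v ∉ M) :
    decMark f M v = f v :=
  if_neg hv

lemma decMark_le_of_forced {f : V → ℕ} {M : Finset V} {v : V} {k : ℕ} (hv : f v ≤ k + 1)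
    (hM : f v = k + 1 → v ∈ M) : decMark f M v ≤ k := by
  by_cases hvM : v ∈ M
  · rw [decMark_of_mem hvM]; omega
  · rw [decMark_of_notMem hvM]
    have := mt hM hvM
    omega

lemma sum_le_card_add_sum_decMark (f : V → ℕ) {M S : Finset V} (hMS : M ⊆ S) :
    ∑ v ∈ S, f v ≤ #M + ∑ v ∈ S, decMark f M v := by
  have hM : #M = ∑ v ∈ S, if v ∈ M then 1 else 0 := by
    rw [sum_boole, filter_mem_eq_inter, inter_eq_right.2 hMS, Nat.cast_id]
  rw [hM, ← sum_add_distrib]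
  refine sum_le_sum fun v _ => ?_
  unfold decMark
  split <;> omega

/-- Painter wins by default: in `t < f w` rounds Lister cannot mark `w` `f w` times. -/
lemma paintFromIn_of_lt (G : SimpleGraph V) :
    ∀ (t : ℕ) (f : V → ℕ) (U : Finset V) (w : V), t < f w → PaintFromIn G t f U
  | 0, _, _, w, hw => Or.inr ⟨w, by omega⟩
  | t + 1, f, U, w, hw => fun M _ _ =>
      ⟨∅, empty_subset _, fun _ hu => absurd hu (notMem_empty _),
        paintFromIn_of_lt G t _ _ w (by unfold decMark; split <;> omega)⟩

lemma paintFromIn_of_sum_lt_s4 [Fintype V] (G : SimpleGraph V) :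
    ∀ (t : ℕ) (f : V → ℕ) (U : Finset V), ∑ v, f v < t → PaintFromIn G t f U
  | 0, _, _, hf => absurd hf (Nat.not_lt_zero _)
  | t + 1, f, U, hf => fun M hne hM =>
      ⟨∅, empty_subset _, fun _ hu => absurd hu (notMem_empty _),
        paintFromIn_of_sum_lt_s4 G t _ _ (by have := decMark_lt f M hne hM; omega)⟩

/-- Lister's move in a round spent on `S` alone: mark the vertices of `S` that must be marked
in every remaining round, or a single markable one if there are none. -/
lemma exists_padding_mark (f : V → ℕ) (S : Finset V) {k t : ℕ} (htk : t ≤ k)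
    (hf : ∀ v ∈ S, f v ≤ k + 1) (hsum : k + 1 ≤ t + ∑ v ∈ S, f v) :
    ∃ M ⊆ S, M.Nonempty ∧ (∀ v ∈ M, 1 ≤ f v) ∧ (∀ v ∈ S, decMark f M v ≤ k) ∧
      k ≤ t + ∑ v ∈ S, decMark f M v := by
  set A := S.filter fun v => f v = k + 1
  have hA : ∀ v ∈ A, f v = k + 1 := fun v hv => (mem_filter.1 hv).2
  rcases A.eq_empty_or_nonempty with hAe | hAne
  · obtain ⟨v₀, hv₀S, hv₀⟩ : ∃ v ∈ S, 1 ≤ f v := by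
      by_contra! h
      rw [sum_eq_zero fun v hv => Nat.lt_one_iff.1 (h v hv)] at hsum
      omega
    refine ⟨{v₀}, singleton_subset_iff.2 hv₀S, singleton_nonempty _,
      fun v hv => mem_singleton.1 hv ▸ hv₀, fun v hv => decMark_le_of_forced (hf v hv) ?_, ?_⟩
    · intro hfv
      exact absurd (mem_filter.2 ⟨hv, hfv⟩) (hAe ▸ notMem_empty v)
    · have := sum_le_card_add_sum_decMark f (singleton_subset_iff.2 hv₀S)
      rw [card_singleton] at this
      omega
  · refine ⟨A, filter_subset _ _, hAne, fun v hv => by rw [hA v hv]; omega,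
      fun v hv => decMark_le_of_forced (hf v hv) fun hfv => mem_filter.2 ⟨hv, hfv⟩, ?_⟩
    calc k ≤ #A * k := Nat.le_mul_of_pos_left k hAne.card_pos
      _ = ∑ v ∈ A, decMark f A v :=
          (sum_const_nat fun v hv => by rw [decMark_of_mem hv, hA v hv]; rfl).symm
      _ ≤ ∑ v ∈ S, decMark f A v := sum_le_sum_of_subset (filter_subset _ _)
      _ ≤ t + ∑ v ∈ S, decMark f A v := Nat.le_add_left _ _

end Marking

section Embedding

variable {V W : Type} [DecidableEq V] [DecidableEq W] {G : SimpleGraph V} {H : SimpleGraph W}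

/-- Lister transfers a winning strategy on `H` to `G`, marking in each round the image of the
set marked in `H` together with the forced vertices outside the image; Painter's answer in
`G` pulls back along `φ` to an answer in `H`. -/
theorem not_paintFromIn_of_embedding {φ : H →g G} (hφ : Function.Injective φ) {S : Finset V}
    (hS : ∀ v, v ∈ S ↔ v ∉ Set.range φ) :
    ∀ (t : ℕ) (fG : V → ℕ) (hH : W → ℕ) (UG : Finset V) (UH : Finset W),
      (∀ w, fG (φ w) = hH w) → (∀ v ∈ S, fG v ≤ t) → (∀ w ∈ UH, φ w ∈ UG) →
      ¬ PaintFromIn H t hH UH → ¬ PaintFromIn G t fG UG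
  | 0, fG, hH, UG, UH, hfh, hSt, hU, hHt, hGt => by
    simp only [PaintFromIn, not_or, not_exists, not_not] at hHt
    obtain ⟨w, hw⟩ := nonempty_iff_ne_empty.2 hHt.1
    rcases hGt with hUG | ⟨v, hv⟩
    · exact notMem_empty _ (hUG ▸ hU w hw)
    · by_cases hvφ : v ∈ Set.range φ
      · obtain ⟨w, rfl⟩ := hvφ
        exact hv (by rw [hfh, hHt.2])
      · exact hv (Nat.le_zero.1 (hSt v ((hS v).2 hvφ)))
  | t + 1, fG, hH, UG, UH, hfh, hSt, hU, hHt, hGt => by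
    simp only [PaintFromIn, not_forall, not_exists, not_and] at hHt
    obtain ⟨MH, hMHne, hMH, hHX⟩ := hHt
    set M := MH.image φ ∪ S.filter fun v => fG v = t + 1
    have hMφ : ∀ w, φ w ∈ M ↔ w ∈ MH := by
      intro w
      simp only [M, mem_union, mem_image, hφ.eq_iff, exists_eq_right, mem_filter, hS,
        Set.mem_range_self, not_true_eq_false, false_and, or_false]
    have hM : ∀ v ∈ M, 1 ≤ fG v := by
      intro v hv
      rcases mem_union.1 hv with hv | hv
      · obtain ⟨w, hw, rfl⟩ := mem_image.1 hv
        exact hfh w ▸ hMH w hw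
      · rw [(mem_filter.1 hv).2]; omega
    obtain ⟨X, hXM, hX, hGX⟩ := hGt M ((hMHne.image φ).mono subset_union_left) hM
    set XH := (MH ∩ UH).filter fun w => φ w ∈ X
    refine not_paintFromIn_of_embedding hφ hS t _ _ (UG \ X) (UH \ XH) ?_ ?_ ?_
      (hHX XH (filter_subset _ _) (hX.comap φ fun w hw => (mem_filter.1 hw).2)) hGX
    · intro w
      simp only [decMark, hMφ, hfh]
    · exact fun v hv => decMark_le_of_forced (hSt v hv) fun hfv =>
        mem_union_right _ (mem_filter.2 ⟨hv, hfv⟩)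
    · intro w hw
      obtain ⟨hwU, hwXH⟩ := mem_sdiff.1 hw
      refine mem_sdiff.2 ⟨hU w hwU, fun hwX => hwXH (mem_filter.2 ⟨?_, hwX⟩)⟩
      exact mem_inter.2 ⟨(hMφ w).1 (mem_inter.1 (hXM hwX)).1, hwU⟩

/-- The game on `G` may last longer than the one on `H`: Lister spends the first `k - t`
rounds marking only vertices outside the image of `φ`. -/
theorem not_paintFromIn_of_embedding_of_le_add_sum {φ : H →g G} (hφ : Function.Injective φ)
    {S : Finset V} (hS : ∀ v, v ∈ S ↔ v ∉ Set.range φ) {t : ℕ} {hH : W → ℕ} {UH : Finset W}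
    (hHt : ¬ PaintFromIn H t hH UH) :
    ∀ (k : ℕ) (fG : V → ℕ) (UG : Finset V),
      (∀ w, fG (φ w) = hH w) → (∀ v ∈ S, fG v ≤ k) → (∀ w ∈ UH, φ w ∈ UG) →
      t ≤ k → k ≤ t + ∑ v ∈ S, fG v → ¬ PaintFromIn G k fG UG := by
  intro k
  induction k with
  | zero =>
    intro fG UG hfh hSk hU htk _
    exact not_paintFromIn_of_embedding hφ hS 0 fG hH UG UH hfh hSk hU (Nat.le_zero.1 htk ▸ hHt)
  | succ k ih =>
    intro fG UG hfh hSk hU htk hsum hGk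
    rcases htk.eq_or_lt with rfl | htk
    · exact not_paintFromIn_of_embedding hφ hS _ fG hH UG UH hfh hSk hU hHt hGk
    obtain ⟨M, hMS, hMne, hM, hSM, hsumM⟩ :=
      exists_padding_mark fG S (Nat.lt_succ_iff.1 htk) hSk hsum
    have hMφ : ∀ w, φ w ∉ M := fun w hw => (hS _).1 (hMS hw) ⟨w, rfl⟩
    obtain ⟨X, hXM, -, hGX⟩ := hGk M hMne hM
    refine ih (decMark fG M) (UG \ X) (fun w => ?_) hSM (fun w hw => ?_)
      (Nat.lt_succ_iff.1 htk) hsumM hGX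
    · rw [decMark_of_notMem (hMφ w), hfh]
    · exact mem_sdiff.2 ⟨hU w hw, fun hwX => hMφ w (mem_inter.1 (hXM hwX)).1⟩

end Embedding

section Invariants

variable {V : Type} [Fintype V] [DecidableEq V] {G : SimpleGraph V} {f : V → ℕ} {t : ℕ}

lemma le_of_not_paintableIn (h : ¬ PaintableIn G f t) (v : V) : f v ≤ t :=
  not_lt.1 fun hv => h (paintFromIn_of_lt G t f univ v hv)

lemma mval_le (hf : ∀ v, f v ≤ t) (h : ¬ PaintableIn G f t) : mval G f ≤ t :=
  Nat.sInf_le ⟨hf, h⟩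

lemma not_paintableIn_mval (h : ¬ PaintableIn G f t) : ¬ PaintableIn G f (mval G f) :=
  (Nat.sInf_mem (s := {t | (∀ v, f v ≤ t) ∧ ¬ PaintableIn G f t})
    ⟨t, le_of_not_paintableIn h, h⟩).2

lemma bddAbove_setOf_not_paintableIn : BddAbove {t | ¬ PaintableIn G f t} :=
  ⟨∑ v, f v, fun _ h => not_lt.1 fun hlt => h (paintFromIn_of_sum_lt_s4 G _ f univ hlt)⟩

lemma le_Mval (h : ¬ PaintableIn G f t) : t ≤ Mval G f :=
  le_csSup bddAbove_setOf_not_paintableIn h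

lemma not_paintableIn_Mval (h : ¬ PaintableIn G f t) : ¬ PaintableIn G f (Mval G f) :=
  Nat.sSup_mem ⟨t, h⟩ bddAbove_setOf_not_paintableIn

end Invariants

end PaintGame

open Classical in
theorem not_paintableIn_of_subgraph_general {V W : Type} [Fintype V] [DecidableEq V]
    [Fintype W] [DecidableEq W] (G : SimpleGraph V) (H : SimpleGraph W)
    (φ : H →g G) (hφ : Function.Injective φ)
    (f : V → ℕ) (h : W → ℕ) (hfh : ∀ w : W, f (φ w) = h w)
    (S : Finset V) (hS : S = Finset.univ.filter (fun v => v ∉ Set.range φ))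
    (K : ℕ) (hK : K = S.sup f)
    (t : ℕ) (ht : ¬ PaintGame.PaintableIn H h t) :
    (∀ k : ℕ, max t K ≤ k → k ≤ t + ∑ v ∈ S, f v → ¬ PaintGame.PaintableIn G f k) ∧
      PaintGame.mval G f ≤ max K (PaintGame.mval H h) ∧
      PaintGame.Mval H h + ∑ v ∈ S, f v ≤ PaintGame.Mval G f := by
  have hSφ : ∀ v, v ∈ S ↔ v ∉ Set.range φ := by simp [hS]
  have hSK : ∀ v ∈ S, f v ≤ K := fun v hv => hK ▸ Finset.le_sup hv
  have hG : ∀ s k, ¬ PaintableIn H h s → K ≤ k → s ≤ k → k ≤ s + ∑ v ∈ S, f v →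
      ¬ PaintableIn G f k := fun s k hs hKk hsk hk =>
    not_paintFromIn_of_embedding_of_le_add_sum hφ hSφ hs k f Finset.univ hfh
      (fun v hv => (hSK v hv).trans hKk) (fun _ _ => Finset.mem_univ _) hsk hk
  have hKsum : K ≤ ∑ v ∈ S, f v :=
    hK ▸ Finset.sup_le fun v hv => Finset.single_le_sum (fun _ _ => Nat.zero_le _) hv
  have hmval := not_paintableIn_mval ht
  refine ⟨fun k hk => hG t k ht (le_of_max_le_right hk) (le_of_max_le_left hk), ?_, ?_⟩
  · refine mval_le (fun v => ?_) (hG _ _ hmval (le_max_left _ _) (le_max_right _ _)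
      (max_le (hKsum.trans (Nat.le_add_left _ _)) (Nat.le_add_right _ _)))
    by_cases hv : v ∈ Set.range φ
    · obtain ⟨w, rfl⟩ := hv
      exact (hfh w ▸ le_of_not_paintableIn hmval w).trans (le_max_right _ _)
    · exact (hSK v ((hSφ v).2 hv)).trans (le_max_left _ _)
  · exact le_Mval (hG _ _ (not_paintableIn_Mval ht)
      (hKsum.trans (Nat.le_add_left _ _)) (Nat.le_add_right _ _) le_rfl)

open Classical in
/-- Lemma `subgraph`.  Suppose the game `(G,f)` contains `(H,h)` (i.e.
`H` is a subgraph of `G`, via the injective homomorphism `φ`, on which `f` agrees with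
`h`), with `V(G) \ V(H)` nonempty, and let `K = max {f v : v ∈ V(G) \ V(H)}`.  If `H` is
not `[h,t]`-paintable then `G` is not `[f,k]`-paintable for every `k` with
`max t K ≤ k ≤ t + Σ_{v ∈ V(G)\V(H)} f v`.  In particular `m(G,f) ≤ max K (m(H,h))` and
`M(G,f) ≥ M(H,h) + Σ_{v ∈ V(G)\V(H)} f v`. -/
theorem not_paintableIn_of_subgraph {V W : Type} [Fintype V] [DecidableEq V]
    [Fintype W] [DecidableEq W] (G : SimpleGraph V) (H : SimpleGraph W)
    (φ : H →g G) (hφ : Function.Injective φ)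
    (f : V → ℕ) (h : W → ℕ) (hfh : ∀ w : W, f (φ w) = h w)
    (S : Finset V) (hS : S = Finset.univ.filter (fun v => v ∉ Set.range φ))
    (hSne : S.Nonempty) (K : ℕ) (hK : K = S.sup f)
    (t : ℕ) (ht : ¬ PaintGame.PaintableIn H h t) :
    (∀ k : ℕ, max t K ≤ k → k ≤ t + ∑ v ∈ S, f v → ¬ PaintGame.PaintableIn G f k) ∧
      PaintGame.mval G f ≤ max K (PaintGame.mval H h) ∧
      PaintGame.Mval H h + ∑ v ∈ S, f v ≤ PaintGame.Mval G f :=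
  not_paintableIn_of_subgraph_general G H φ hφ f h hfh S hS K hK t ht
end

section
/- For every n ≥ 3, the path P_n on n vertices is not [f'',2]-paintable; consequently m(P_n,f'') = 2. Moreover m(P_2,f'') = 1. -/
open SimpleGraph PaintGame

private lemma alt_lemma {n : ℕ} (X₁ X₂ : Finset (Fin n))
    (hcov : ∀ v, v ∈ X₁ ∨ v ∈ X₂)
    (h1 : PaintGame.IndepOn (SimpleGraph.pathGraph n) X₁)
    (h2 : PaintGame.IndepOn (SimpleGraph.pathGraph n) X₂)
    (hn : 0 < n) (h0 : (⟨0, hn⟩ : Fin n) ∈ X₁) :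
    ∀ i (h : i < n), ((⟨i, h⟩ : Fin n) ∈ X₁ ↔ i % 2 = 0) := by
  intro i
  induction i with
  | zero => intro h; simpa using h0
  | succ i ih =>
    intro h
    have hi : i < n := Nat.lt_of_succ_lt h
    have adj : (SimpleGraph.pathGraph n).Adj ⟨i, hi⟩ ⟨i + 1, h⟩ := by
      rw [SimpleGraph.pathGraph_adj]; left; rfl
    have hprev := ih hi
    by_cases hmem : (⟨i, hi⟩ : Fin n) ∈ X₁
    · have hnot : (⟨i + 1, h⟩ : Fin n) ∉ X₁ := fun hc => h1 _ hmem _ hc adj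
      have he : i % 2 = 0 := hprev.mp hmem
      constructor
      · intro hc; exact absurd hc hnot
      · intro hc; omega
    · have hX2 : (⟨i, hi⟩ : Fin n) ∈ X₂ := (hcov _).resolve_left hmem
      have hnot : (⟨i + 1, h⟩ : Fin n) ∉ X₂ := fun hc => h2 _ hX2 _ hc adj
      have hin : (⟨i + 1, h⟩ : Fin n) ∈ X₁ := (hcov _).resolve_right hnot
      have hne : ¬ i % 2 = 0 := fun he => hmem (hprev.mpr he)
      constructor
      · intro _; omega
      · intro _; exact hin

private lemma path_not_paintable {n : ℕ} (hn : 3 ≤ n) :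
    ¬ PaintGame.PaintableIn (SimpleGraph.pathGraph n)
        (fun v => if v.val = 0 ∨ v.val = n - 1 then 1 else 2) 2 := by
  intro hP
  set f : Fin n → ℕ := fun v => if v.val = 0 ∨ v.val = n - 1 then 1 else 2 with hfdef
  have h0n : (0 : ℕ) < n := by omega
  have h1n : (1 : ℕ) < n := by omega
  have hn1 : n - 1 < n := by omega
  rcases Nat.even_or_odd n with hpar | hpar
  · -- n even: mark the internal vertices first, then everything
    rcases hpar with ⟨k, hk⟩
    set M₁ : Finset (Fin n) := Finset.univ.filter (fun v => ¬(v.val = 0 ∨ v.val = n - 1))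
      with hM₁
    have hne₁ : M₁.Nonempty := ⟨⟨1, h1n⟩, by simp [hM₁]; omega⟩
    have hf₁ : ∀ v ∈ M₁, 1 ≤ f v := by
      intro v _; simp only [hfdef]; split <;> omega
    obtain ⟨X₁, hX₁sub, hX₁ind, hP1⟩ := hP M₁ hne₁ hf₁
    have hf1val : ∀ v : Fin n, PaintGame.decMark f M₁ v = 1 := by
      intro v
      show (if v ∈ M₁ then f v - 1 else f v) = 1
      have hfv : f v = if v.val = 0 ∨ v.val = n - 1 then 1 else 2 := rfl
      by_cases hv : v.val = 0 ∨ v.val = n - 1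
      · have hvM : v ∉ M₁ := by simp only [hM₁, Finset.mem_filter]; tauto
        rw [if_neg hvM, hfv, if_pos hv]
      · have hvM : v ∈ M₁ := by
          simp only [hM₁, Finset.mem_filter]
          exact ⟨Finset.mem_univ v, hv⟩
        rw [if_pos hvM, hfv, if_neg hv]
    obtain ⟨X₂, hX₂sub, hX₂ind, hP0⟩ :=
      hP1 Finset.univ ⟨⟨1, h1n⟩, Finset.mem_univ _⟩ (fun v _ => (hf1val v).ge)
    have hzero : ∀ v : Fin n,
        PaintGame.decMark (PaintGame.decMark f M₁) Finset.univ v = 0 := by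
      intro v
      show (if v ∈ Finset.univ then PaintGame.decMark f M₁ v - 1
        else PaintGame.decMark f M₁ v) = 0
      rw [if_pos (Finset.mem_univ v), hf1val]
    have hU2 : (Finset.univ \ X₁) \ X₂ = ∅ := by
      rcases hP0 with h | ⟨v, hv⟩
      · exact h
      · exact absurd (hzero v) hv
    have hcov : ∀ v : Fin n, v ∈ X₁ ∨ v ∈ X₂ := by
      intro v
      by_contra hc
      push_neg at hc
      have hv : v ∈ (Finset.univ \ X₁) \ X₂ := by
        simp [Finset.mem_sdiff, hc.1, hc.2]
      rw [hU2] at hv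
      exact absurd hv (Finset.notMem_empty v)
    have h0X1 : (⟨0, h0n⟩ : Fin n) ∉ X₁ := by
      intro hc
      have := Finset.mem_of_mem_inter_left (hX₁sub hc)
      simp [hM₁] at this
    have h0X2 : (⟨0, h0n⟩ : Fin n) ∈ X₂ := (hcov _).resolve_left h0X1
    have halt := alt_lemma X₂ X₁ (fun v => (hcov v).symm) hX₂ind hX₁ind h0n h0X2
    have hlast1 : (⟨n - 1, hn1⟩ : Fin n) ∉ X₁ := by
      intro hc
      have := Finset.mem_of_mem_inter_left (hX₁sub hc)
      simp [hM₁] at this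
    have hlast2 : (⟨n - 1, hn1⟩ : Fin n) ∈ X₂ := (hcov _).resolve_left hlast1
    have := (halt (n - 1) hn1).mp hlast2
    omega
  · -- n odd: mark everything but the last vertex, then everything but the first
    rcases hpar with ⟨k, hk⟩
    set M₁ : Finset (Fin n) := Finset.univ.filter (fun v => ¬ v.val = n - 1) with hM₁
    have hne₁ : M₁.Nonempty := ⟨⟨1, h1n⟩, by simp [hM₁]; omega⟩
    have hf₁ : ∀ v ∈ M₁, 1 ≤ f v := by
      intro v _; simp only [hfdef]; split <;> omega
    obtain ⟨X₁, hX₁sub, hX₁ind, hP1⟩ := hP M₁ hne₁ hf₁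
    have hf1val : ∀ v : Fin n,
        PaintGame.decMark f M₁ v = if v.val = 0 then 0 else 1 := by
      intro v
      show (if v ∈ M₁ then f v - 1 else f v) = _
      have hfv : f v = if v.val = 0 ∨ v.val = n - 1 then 1 else 2 := rfl
      by_cases hv : v.val = n - 1
      · have hvM : v ∉ M₁ := by simp only [hM₁, Finset.mem_filter]; tauto
        have h0 : ¬ v.val = 0 := by omega
        rw [if_neg hvM, hfv, if_pos (Or.inr hv), if_neg h0]
      · have hvM : v ∈ M₁ := by
          simp only [hM₁, Finset.mem_filter]
          exact ⟨Finset.mem_univ v, hv⟩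
        by_cases h0 : v.val = 0
        · rw [if_pos hvM, hfv, if_pos (Or.inl h0), if_pos h0]
        · rw [if_pos hvM, hfv, if_neg (by tauto), if_neg h0]
    set M₂ : Finset (Fin n) := Finset.univ.filter (fun v => ¬ v.val = 0) with hM₂
    have hne₂ : M₂.Nonempty := ⟨⟨1, h1n⟩, by simp [hM₂]⟩
    have hf₂ : ∀ v ∈ M₂, 1 ≤ PaintGame.decMark f M₁ v := by
      intro v hv
      have hv0 : ¬ v.val = 0 := by simpa [hM₂] using hv
      rw [hf1val, if_neg hv0]
    obtain ⟨X₂, hX₂sub, hX₂ind, hP0⟩ := hP1 M₂ hne₂ hf₂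
    have hzero : ∀ v : Fin n,
        PaintGame.decMark (PaintGame.decMark f M₁) M₂ v = 0 := by
      intro v
      show (if v ∈ M₂ then PaintGame.decMark f M₁ v - 1
        else PaintGame.decMark f M₁ v) = 0
      by_cases hv : v ∈ M₂
      · have hv0 : ¬ v.val = 0 := by simpa [hM₂] using hv
        rw [if_pos hv, hf1val, if_neg hv0]
      · have hv0 : v.val = 0 := by simpa [hM₂] using hv
        rw [if_neg hv, hf1val, if_pos hv0]
    have hU2 : (Finset.univ \ X₁) \ X₂ = ∅ := by
      rcases hP0 with h | ⟨v, hv⟩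
      · exact h
      · exact absurd (hzero v) hv
    have hcov : ∀ v : Fin n, v ∈ X₁ ∨ v ∈ X₂ := by
      intro v
      by_contra hc
      push_neg at hc
      have hv : v ∈ (Finset.univ \ X₁) \ X₂ := by
        simp [Finset.mem_sdiff, hc.1, hc.2]
      rw [hU2] at hv
      exact absurd hv (Finset.notMem_empty v)
    have h0X2 : (⟨0, h0n⟩ : Fin n) ∉ X₂ := by
      intro hc
      have := Finset.mem_of_mem_inter_left (hX₂sub hc)
      simp [hM₂] at this
    have h0X1 : (⟨0, h0n⟩ : Fin n) ∈ X₁ := (hcov _).resolve_right h0X2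
    have halt := alt_lemma X₁ X₂ hcov hX₁ind hX₂ind h0n h0X1
    have hlast : (⟨n - 1, hn1⟩ : Fin n) ∈ X₁ := by
      apply (halt (n - 1) hn1).mpr; omega
    have := Finset.mem_of_mem_inter_left (hX₁sub hlast)
    simp [hM₁] at this
/-- Lemma `2-path`.  For every `n ≥ 3`, the path `P_n` on `n` vertices
is not `[f'',2]`-paintable (where `f''` assigns `1` to the two endpoints and `2` to each
internal vertex); consequently `m(P_n, f'') = 2`.  Moreover `m(P_2, f'') = 1`. -/
theorem mval_path (n : ℕ) (hn : 3 ≤ n) :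
    (¬ PaintGame.PaintableIn (SimpleGraph.pathGraph n)
        (fun v => if v.val = 0 ∨ v.val = n - 1 then 1 else 2) 2) ∧
    PaintGame.mval (SimpleGraph.pathGraph n)
        (fun v => if v.val = 0 ∨ v.val = n - 1 then 1 else 2) = 2 ∧
    PaintGame.mval (SimpleGraph.pathGraph 2)
        (fun v => if v.val = 0 ∨ v.val = 2 - 1 then 1 else 2) = 1 := by
  have key := path_not_paintable hn
  have h1n : (1 : ℕ) < n := by omega
  refine ⟨key, ?_, ?_⟩
  · -- m(P_n, f'') = 2
    have mem2 : 2 ∈ {t | (∀ v : Fin n,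
        (if v.val = 0 ∨ v.val = n - 1 then 1 else 2) ≤ t) ∧
        ¬ PaintGame.PaintableIn (SimpleGraph.pathGraph n)
          (fun v => if v.val = 0 ∨ v.val = n - 1 then 1 else 2) t} := by
      refine ⟨fun v => ?_, key⟩
      split <;> omega
    refine le_antisymm (Nat.sInf_le mem2) (le_csInf ⟨2, mem2⟩ ?_)
    rintro t ⟨ht, -⟩
    have h2 : (if (1 : ℕ) = 0 ∨ (1 : ℕ) = n - 1 then 1 else 2) ≤ t := ht ⟨1, h1n⟩
    rw [if_neg (show ¬((1 : ℕ) = 0 ∨ (1 : ℕ) = n - 1) by omega)] at h2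
    exact h2
  · -- m(P₂, f'') = 1
    have hval : ∀ v : Fin 2, (if v.val = 0 ∨ v.val = 2 - 1 then 1 else 2) = 1 := by
      intro v
      have := v.isLt
      rw [if_pos (by omega)]
    have hnp : ¬ PaintGame.PaintableIn (SimpleGraph.pathGraph 2)
        (fun v => if v.val = 0 ∨ v.val = 2 - 1 then 1 else 2) 1 := by
      intro hP
      obtain ⟨X, hXsub, hXind, hP0⟩ := hP Finset.univ ⟨0, Finset.mem_univ _⟩
        (fun v _ => (hval v).ge)
      have hzero : ∀ v : Fin 2, PaintGame.decMark
          (fun v : Fin 2 => if v.val = 0 ∨ v.val = 2 - 1 then 1 else 2)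
          Finset.univ v = 0 := by
        intro v
        show (if v ∈ Finset.univ then
          (if v.val = 0 ∨ v.val = 2 - 1 then 1 else 2) - 1
          else (if v.val = 0 ∨ v.val = 2 - 1 then 1 else 2)) = 0
        rw [if_pos (Finset.mem_univ v), hval]
      have hU : (Finset.univ : Finset (Fin 2)) \ X = ∅ := by
        rcases hP0 with h | ⟨v, hv⟩
        · exact h
        · exact absurd (hzero v) hv
      have hXuniv : ∀ v : Fin 2, v ∈ X := by
        intro v
        by_contra hc
        have hv : v ∈ (Finset.univ : Finset (Fin 2)) \ X := by simp [hc]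
        rw [hU] at hv
        exact absurd hv (Finset.notMem_empty v)
      have adj : (SimpleGraph.pathGraph 2).Adj 0 1 := by
        rw [SimpleGraph.pathGraph_adj]; left; rfl
      exact hXind 0 (hXuniv 0) 1 (hXuniv 1) adj
    have mem1 : 1 ∈ {t | (∀ v : Fin 2,
        (if v.val = 0 ∨ v.val = 2 - 1 then 1 else 2) ≤ t) ∧
        ¬ PaintGame.PaintableIn (SimpleGraph.pathGraph 2)
          (fun v => if v.val = 0 ∨ v.val = 2 - 1 then 1 else 2) t} :=
      ⟨fun v => (hval v).le, hnp⟩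
    refine le_antisymm (Nat.sInf_le mem1) (le_csInf ⟨1, mem1⟩ ?_)
    rintro t ⟨ht, -⟩
    have h2 : (if (0 : ℕ) = 0 ∨ (0 : ℕ) = 2 - 1 then 1 else 2) ≤ t := ht 0
    rw [if_pos (Or.inl rfl)] at h2
    exact h2
end

section
/- If G is a connected bipartite graph containing a cycle and f' assigns 1 to one designated vertex u of G and 2 to every other vertex, then m(G,f') = 3; that is, G is [f',2]-paintable but not [f',3]-paintable. -/
open SimpleGraph PaintGame

/-! Painter wins the two-round game by colouring first the marked vertices of the colour class
that contains `u` exactly when `u` is marked, then the marked vertices of the other class: every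
vertex left uncoloured still has an unused mark.

Lister wins the three-round game around a vertex `w ≠ u` in the colour class of `u` with two
neighbours `x ≠ y` that `u` reaches without passing through `w`; such a `w` lies on a cycle, one
or two steps away from the vertex of the cycle nearest to `u`. Lister first marks every vertex
but `w`. If Painter leaves `u`, or an edge avoiding `w`, uncoloured, Lister marks every vertex but
`u`, then `{w}`. Otherwise the coloured set contains `u` and meets every edge avoiding `w`, so
along walks from `u` avoiding `w` it alternates exactly like the 2-colouring; hence `w`, `x`, `y`
are uncoloured, and Lister marks every vertex but `u` and `y`, then `{w, y}`. -/

namespace SimpleGraph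

variable {V : Type} {G : SimpleGraph V}

theorem Walk.even_length_iff_of_forall_darts {p : V → Prop} {a b : V} (W : G.Walk a b)
    (h : ∀ d ∈ W.darts, (p d.fst ↔ ¬ p d.snd)) : Even W.length ↔ (p a ↔ p b) := by
  induction W with
  | nil => simp
  | cons hadj W ih =>
    simp only [Walk.darts_cons, List.mem_cons, forall_eq_or_imp] at h
    simp only [Walk.length_cons, Nat.even_add_one, ih h.2]
    have := h.1
    tauto

theorem Walk.IsCycle.exists_eq_cons_concat {w : V} {C : G.Walk w w} (hC : C.IsCycle) :
    ∃ (x y : V) (hx : G.Adj w x) (hy : G.Adj y w) (T : G.Walk x y),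
      x ≠ y ∧ w ∉ T.support ∧ C = .cons hx (T.concat hy) := by
  cases C with
  | nil => exact absurd hC Walk.not_isCycle_nil
  | cons hx T =>
    have hT : ¬ T.Nil := Walk.not_nil_of_isCycle_cons hC
    refine ⟨_, _, hx, Walk.adj_penultimate hT, T.dropLast, ?_, ?_, by rw [Walk.concat_dropLast]⟩
    · simpa [Walk.penultimate_cons_of_not_nil _ _ hT] using hC.snd_ne_penultimate
    · have hnodup := ((Walk.cons_isCycle_iff _ _).mp hC).1.support_nodup
      rw [← Walk.support_dropLast_concat hT, List.nodup_append] at hnodup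
      exact fun hw => hnodup.2.2 w hw w (List.mem_singleton_self w) rfl

theorem Connected.exists_walk_meeting_only_at_end (hG : G.Connected) (u : V) {S : Set V}
    (hS : S.Nonempty) : ∃ z ∈ S, ∃ P : G.Walk u z, ∀ v ∈ P.support, v ∈ S → v = z := by
  classical
  set z := Function.argminOn (G.dist u) S hS
  obtain ⟨P, hP⟩ := hG.exists_walk_length_eq_dist u z
  refine ⟨z, Function.argminOn_mem _ _ _, P, fun v hv hvS => by_contra fun hvz => ?_⟩
  have hcloser : G.dist u v < G.dist u z :=
    hP ▸ (dist_le _).trans_lt (P.length_takeUntil_lt_length hv hvz)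
  exact (Function.argminOn_le (G.dist u) S hvS).not_gt hcloser

variable [DecidableEq V]

theorem Walk.IsCycle.exists_adj_ne_of_mem_support {v z : V} {C : G.Walk v v}
    (hC : C.IsCycle) (hz : z ∈ C.support) :
    ∃ a b, a ∈ C.support ∧ b ∈ C.support ∧ a ≠ z ∧ b ≠ z ∧ G.Adj a b := by
  obtain ⟨x, y, hx, hy, T, hxy, hzT, hrot⟩ := (hC.rotate hz).exists_eq_cons_concat
  have hmem : ∀ a ∈ T.support, a ∈ C.support ∧ a ≠ z := fun a ha =>
    ⟨(C.mem_support_rotate_iff z hz).mp (by simp [hrot, ha]), by rintro rfl; exact hzT ha⟩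
  have hT : ¬ T.Nil := Walk.not_nil_of_ne hxy
  obtain ⟨hxC, hxz⟩ := hmem x T.start_mem_support
  obtain ⟨hsC, hsz⟩ := hmem T.snd (T.getVert_mem_support 1)
  exact ⟨x, T.snd, hxC, hsC, hxz, hsz, T.adj_snd hT⟩

theorem Connected.exists_two_neighbors_reachable_avoiding (hG : G.Connected)
    (c : G.Coloring Bool) (hcyc : ¬ G.IsAcyclic) (u : V) :
    ∃ w x y, w ≠ u ∧ c w = c u ∧ G.Adj w x ∧ G.Adj w y ∧ x ≠ y ∧
      (∃ Wx : G.Walk u x, w ∉ Wx.support) ∧ ∃ Wy : G.Walk u y, w ∉ Wy.support := by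
  obtain ⟨v, K, hK⟩ : ∃ v, ∃ K : G.Walk v v, K.IsCycle := by simpa [IsAcyclic] using hcyc
  obtain ⟨z, hzK, P, hP⟩ :=
    hG.exists_walk_meeting_only_at_end u (S := {a | a ∈ K.support}) ⟨v, K.start_mem_support⟩
  obtain ⟨w, hwK, hwz, hcw⟩ : ∃ w ∈ K.support, w ≠ z ∧ c w = c u := by
    obtain ⟨a, b, haK, hbK, haz, hbz, hab⟩ := hK.exists_adj_ne_of_mem_support hzK
    by_cases ha : c a = c u
    · exact ⟨a, haK, haz, ha⟩
    · exact ⟨b, hbK, hbz,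
        (Bool.eq_not.mpr (c.valid hab).symm).trans (Bool.eq_not.mpr (Ne.symm ha)).symm⟩
  have hwP : w ∉ P.support := fun h => hwz (hP w h hwK)
  obtain ⟨x, y, hx, hy, T, hxy, hwT, hrot⟩ := (hK.rotate hwK).exists_eq_cons_concat
  have hzT : z ∈ T.support := by
    have := (K.mem_support_rotate_iff w hwK).mpr hzK
    simpa [hrot, hwz.symm] using this
  refine ⟨w, x, y, fun hwu => hwz (hP w (hwu ▸ P.start_mem_support) hwK), hcw, hx, hy.symm, hxy,
    ⟨P.append (T.takeUntil z hzT).reverse, ?_⟩, P.append (T.dropUntil z hzT), ?_⟩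
  · simpa [Walk.mem_support_append_iff, hwP] using
      fun h => hwT (T.support_takeUntil_subset_support hzT h)
  · simpa [Walk.mem_support_append_iff, hwP] using
      fun h => hwT (T.support_dropUntil_subset_support hzT h)

end SimpleGraph

namespace PaintGame

variable {V : Type} {G : SimpleGraph V}

theorem IndepOn.mem_iff_mem_iff_of_walk {X : Finset V} (hX : IndepOn G X) (c : G.Coloring Bool)
    {a b : V} (W : G.Walk a b) (hcover : ∀ d ∈ W.darts, d.fst ∈ X ∨ d.snd ∈ X) :
    (a ∈ X ↔ b ∈ X) ↔ c a = c b := by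
  have halt : ∀ d ∈ W.darts, (d.fst ∈ X ↔ d.snd ∉ X) := fun d hd => by
    have : ¬ (d.fst ∈ X ∧ d.snd ∈ X) := fun ⟨h₁, h₂⟩ => hX _ h₁ _ h₂ d.adj
    have := hcover d hd
    tauto
  rw [← W.even_length_iff_of_forall_darts halt, c.even_length_iff_congr W, Bool.coe_iff_coe]

theorem indepOn_filter_color [Fintype V] {α : Type*} [DecidableEq α] (c : G.Coloring α)
    (k : α) : IndepOn G (Finset.univ.filter fun v => c v = k) := by
  intro a ha b hb hab
  simp only [Finset.mem_filter, Finset.mem_univ, true_and] at ha hb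
  exact c.valid hab (ha.trans hb.symm)

variable [DecidableEq V]

theorem not_paintFromIn_two {f : V → ℕ} {U M₂ M₃ : Finset V} (hM₂ : M₂.Nonempty)
    (hM₃ : M₃.Nonempty) (hf₂ : ∀ v ∈ M₂, 1 ≤ f v) (hf₃ : ∀ v ∈ M₃, 1 ≤ decMark f M₂ v)
    (hused : ∀ v, decMark (decMark f M₂) M₃ v = 0)
    (hleft : ∀ X₂ X₃, X₂ ⊆ M₂ ∩ U → IndepOn G X₂ → X₃ ⊆ M₃ ∩ (U \ X₂) → IndepOn G X₃ →
      ((U \ X₂) \ X₃).Nonempty) :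
    ¬ PaintFromIn G 2 f U := by
  intro h
  obtain ⟨X₂, hX₂, hX₂i, h⟩ := h M₂ hM₂ hf₂
  obtain ⟨X₃, hX₃, hX₃i, h | ⟨v, hv⟩⟩ := h M₃ hM₃ hf₃
  · exact (hleft X₂ X₃ hX₂ hX₂i hX₃ hX₃i).ne_empty h
  · exact hv (hused v)

variable [Fintype V]

theorem compl_filter_color_bool (c : G.Coloring Bool) (k : Bool) :
    (Finset.univ.filter fun v => c v = k)ᶜ = Finset.univ.filter fun v => c v = !k := by
  ext v
  simp [Bool.eq_not]

theorem mval_eq_of_forall_lt {f : V → ℕ} {t : ℕ} (hft : ∀ v, f v ≤ t) (ht : ¬ PaintableIn G f t)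
    (hlt : ∀ s < t, (∀ v, f v ≤ s) → PaintableIn G f s) : mval G f = t :=
  le_antisymm (Nat.sInf_le ⟨hft, ht⟩) <|
    le_csInf ⟨t, hft, ht⟩ fun s ⟨hfs, hs⟩ => not_lt.mp fun hst => hs (hlt s hst hfs)

theorem paintFromIn_one_of_indepOn_compl {S : Finset V} (hS : IndepOn G Sᶜ) {f : V → ℕ}
    {M : Finset V} (hf : ∀ v, 2 ≤ f v ∨ 1 ≤ f v ∧ (v ∈ S ↔ v ∈ M)) :
    PaintFromIn G 1 (decMark f M) (Finset.univ \ (M ∩ S)) := by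
  intro M' _ _
  refine ⟨M' \ S, ?_, fun a ha b hb => hS a (by simp_all) b (by simp_all), ?_⟩
  · intro v hv
    simp_all
  · rw [PaintFromIn, or_iff_not_imp_left]
    intro hlost
    obtain ⟨v, hv⟩ := Finset.nonempty_iff_ne_empty.mpr hlost
    refine ⟨v, ?_⟩
    simp only [Finset.mem_sdiff, Finset.mem_univ, Finset.mem_inter, true_and] at hv
    simp only [decMark]
    rcases hf v with h | h <;> split_ifs <;> first | omega | tauto

theorem paintableIn_two_of_coloring (c : G.Coloring Bool) {f : V → ℕ} {u : V} (hu : 1 ≤ f u)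
    (hf : ∀ v, v ≠ u → 2 ≤ f v) : PaintableIn G f 2 := by
  intro M _ _
  set S := Finset.univ.filter fun v => c v = if u ∈ M then c u else !c u
  refine ⟨M ∩ S, by simp [Finset.inter_subset_left], fun a ha b hb =>
    indepOn_filter_color c _ a (Finset.mem_inter.mp ha).2 b (Finset.mem_inter.mp hb).2, ?_⟩
  refine paintFromIn_one_of_indepOn_compl
    (by rw [compl_filter_color_bool]; exact indepOn_filter_color c _) fun v => ?_
  by_cases hv : v = u
  · subst hv
    by_cases h : v ∈ M <;> simp [S, h, hu]
  · exact Or.inl (hf v hv)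

theorem not_paintFromIn_after_erase_of_mem_or_adj {u w : V} (hwu : w ≠ u) {U : Finset V}
    (hU : u ∈ U ∨ ∃ a ∈ U, ∃ b ∈ U, a ≠ w ∧ b ≠ w ∧ G.Adj a b) :
    ¬ PaintFromIn G 2 (decMark (fun v => if v = u then 1 else 2) (Finset.univ.erase w)) U := by
  refine not_paintFromIn_two (M₂ := Finset.univ.erase u) (M₃ := {w}) ⟨w, by simpa using hwu⟩
    (Finset.singleton_nonempty w) ?_ ?_ ?_ fun X₂ X₃ hX₂ hX₂i hX₃ _ => ?_
  · intro v hv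
    by_cases v = w <;> simp_all [decMark]
  · simp [decMark, hwu]
  · intro v
    by_cases v = u <;> by_cases v = w <;> simp_all [decMark]
  · have hX₃w : ∀ v ∈ X₃, v = w := fun v hv => by simpa using (Finset.mem_inter.mp (hX₃ hv)).1
    rcases hU with hu | ⟨a, ha, b, hb, haw, hbw, hab⟩
    · refine ⟨u, ?_⟩
      have : u ∉ X₂ := fun h => by simpa using (Finset.mem_inter.mp (hX₂ h)).1
      grind
    · by_cases haX₂ : a ∈ X₂
      · have : b ∉ X₂ := fun hbX₂ => hX₂i a haX₂ b hbX₂ hab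
        exact ⟨b, by grind⟩
      · exact ⟨a, by grind⟩

theorem not_paintFromIn_after_erase_of_adj_adj {u w x y : V} (hwu : w ≠ u) (hyu : y ≠ u)
    (hwx : G.Adj w x) (hwy : G.Adj w y) (hxy : x ≠ y) {U : Finset V} (hw : w ∈ U)
    (hx : x ∈ U) (hy : y ∈ U) :
    ¬ PaintFromIn G 2 (decMark (fun v => if v = u then 1 else 2) (Finset.univ.erase w)) U := by
  have hxw := hwx.ne.symm
  have hyw := hwy.ne.symm
  refine not_paintFromIn_two (M₂ := (Finset.univ.erase u).erase y) (M₃ := {w, y})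
    ⟨w, by simp [hwu, hyw.symm]⟩ (Finset.insert_nonempty w {y}) ?_ ?_ ?_
    fun X₂ X₃ hX₂ hX₂i hX₃ hX₃i => ?_
  · intro v hv
    by_cases v = w <;> simp_all [decMark]
  · intro v hv
    rcases Finset.mem_insert.mp hv with rfl | hv
    · simp [decMark, hwu, hyw.symm]
    · simp_all [decMark]
  · intro v
    by_cases v = u <;> by_cases v = w <;> by_cases v = y <;> simp_all [decMark]
  · have hyX₂ : y ∉ X₂ := fun h => by simpa using (Finset.mem_inter.mp (hX₂ h)).1
    have hX₃wy : ∀ v ∈ X₃, v = w ∨ v = y := fun v hv => by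
      simpa using (Finset.mem_inter.mp (hX₃ hv)).1
    by_cases hxX₂ : x ∈ X₂
    · have hwX₂ : w ∉ X₂ := fun h => hX₂i x hxX₂ w h hwx.symm
      by_cases hwX₃ : w ∈ X₃
      · have : y ∉ X₃ := fun h => hX₃i w hwX₃ y h hwy
        exact ⟨y, by grind⟩
      · exact ⟨w, by grind⟩
    · exact ⟨x, by grind⟩

theorem not_paintableIn_three (c : G.Coloring Bool) {u w x y : V} (hwu : w ≠ u)
    (hcw : c w = c u) (hwx : G.Adj w x) (hwy : G.Adj w y) (hxy : x ≠ y) (Wx : G.Walk u x)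
    (hWx : w ∉ Wx.support) (Wy : G.Walk u y) (hWy : w ∉ Wy.support) :
    ¬ PaintableIn G (fun v => if v = u then 1 else 2) 3 := by
  intro h
  obtain ⟨X, hX, hXi, h⟩ := h (Finset.univ.erase w) ⟨u, by simpa using hwu.symm⟩
    fun v _ => by dsimp only; split_ifs <;> omega
  have hwX : w ∉ X := fun h => by simpa using (Finset.mem_inter.mp (hX h)).1
  by_cases hA : u ∈ Finset.univ \ X ∨
      ∃ a ∈ Finset.univ \ X, ∃ b ∈ Finset.univ \ X, a ≠ w ∧ b ≠ w ∧ G.Adj a b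
  · exact not_paintFromIn_after_erase_of_mem_or_adj hwu hA h
  simp only [Finset.mem_sdiff, Finset.mem_univ, true_and, not_or, not_not, not_exists,
    not_and] at hA
  obtain ⟨huX, hcover⟩ := hA
  have hnotX : ∀ {v} (W : G.Walk u v), w ∉ W.support → G.Adj w v → v ∉ X := by
    intro v W hW hwv hv
    refine c.valid hwv (hcw.trans ((hXi.mem_iff_mem_iff_of_walk c W fun d hd => ?_).mp
      (iff_of_true huX hv)))
    by_contra! hd'
    exact hcover d.fst hd'.1 d.snd hd'.2
      (fun h => hW (h ▸ W.dart_fst_mem_support_of_mem_darts hd))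
      (fun h => hW (h ▸ W.dart_snd_mem_support_of_mem_darts hd)) d.adj
  have hxX := hnotX Wx hWx hwx
  have hyX := hnotX Wy hWy hwy
  exact not_paintFromIn_after_erase_of_adj_adj hwu (fun h => hyX (by rwa [h])) hwx hwy hxy
    (by simpa using hwX) (by simpa using hxX) (by simpa using hyX) h

end PaintGame

/-- Lemma `bip1`.  If `G` is a connected bipartite graph containing a
cycle and `f'` assigns `1` to one designated vertex `u` of `G` and `2` to every other
vertex, then `m(G,f') = 3`; that is, `G` is `[f',2]`-paintable but not `[f',3]`-paintable. -/
theorem mval_connected_bipartite_with_cycle {V : Type} [Fintype V] [DecidableEq V]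
    (G : SimpleGraph V) (hconn : G.Connected) (hbip : G.Colorable 2)
    (hcyc : ¬ G.IsAcyclic) (u : V) :
    PaintGame.mval G (fun v => if v = u then 1 else 2) = 3 ∧
    PaintGame.PaintableIn G (fun v => if v = u then 1 else 2) 2 ∧
    ¬ PaintGame.PaintableIn G (fun v => if v = u then 1 else 2) 3 := by
  obtain ⟨c⟩ := hbip
  let c₂ : G.Coloring Bool := recolorOfEquiv G finTwoEquiv c
  obtain ⟨w, x, y, hwu, hcw, hwx, hwy, hxy, ⟨Wx, hWx⟩, Wy, hWy⟩ :=
    hconn.exists_two_neighbors_reachable_avoiding c₂ hcyc u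
  have h2 : PaintableIn G (fun v => if v = u then 1 else 2) 2 :=
    paintableIn_two_of_coloring c₂ (u := u) (by simp) fun v hv => by simp [hv]
  have h3 := not_paintableIn_three c₂ hwu hcw hwx hwy hxy Wx hWx Wy hWy
  refine ⟨mval_eq_of_forall_lt (fun v => by split_ifs <;> omega) h3 fun s hs hfs => ?_, h2, h3⟩
  obtain rfl : s = 2 := by
    have := hfs w
    simp only [hwu, if_false] at this
    omega
  exact h2
end

section
/- If G is a bipartite graph that contains a subgraph of the form C_m·P_k·C_n, then m(G) = 3. -/
open SimpleGraph PaintGame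

namespace DumbbellAux

open SimpleGraph

variable {V : Type} {G : SimpleGraph V}

lemma getVert_eq_get {u v : V} (p : G.Walk u v) (i : ℕ) (h : i ≤ p.length) :
    p.getVert i = p.support[i]'(by rw [SimpleGraph.Walk.length_support]; omega) := by
  induction p generalizing i with
  | nil =>
      have h0 : i = 0 := by simpa using h
      subst h0; simp
  | cons h' q ih =>
      cases i with
      | zero => simp
      | succ k =>
          rw [SimpleGraph.Walk.getVert_cons_succ]
          simp only [SimpleGraph.Walk.support_cons, List.getElem_cons_succ]
          exact ih k (by simpa using h)

lemma path_getVert_inj {u v : V} {p : G.Walk u v} (hp : p.IsPath) {i j : ℕ}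
    (hi : i ≤ p.length) (hj : j ≤ p.length) (h : p.getVert i = p.getVert j) : i = j := by
  rw [getVert_eq_get p i hi, getVert_eq_get p j hj] at h
  exact (List.Nodup.getElem_inj_iff hp.support_nodup).mp h

lemma cycle_getVert_inj {u : V} {p : G.Walk u u} (hp : p.IsCycle) {i j : ℕ}
    (hi1 : 1 ≤ i) (hi : i ≤ p.length) (hj1 : 1 ≤ j) (hj : j ≤ p.length)
    (h : p.getVert i = p.getVert j) : i = j := by
  have hlen : p.support.length = p.length + 1 := p.length_support
  have hti : i - 1 < p.support.tail.length := by
    rw [List.length_tail, hlen]; omega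
  have htj : j - 1 < p.support.tail.length := by
    rw [List.length_tail, hlen]; omega
  have ei : i - 1 + 1 = i := by omega
  have ej : j - 1 + 1 = j := by omega
  have e1 : p.support.tail[i-1] = p.getVert i := by
    rw [List.getElem_tail, getVert_eq_get p i hi]
    congr 1
  have e2 : p.support.tail[j-1] = p.getVert j := by
    rw [List.getElem_tail, getVert_eq_get p j hj]
    congr 1
  have : p.support.tail[i-1] = p.support.tail[j-1] := by rw [e1, e2, h]
  have := (List.Nodup.getElem_inj_iff hp.support_nodup).mp this
  omega

lemma coloring_walk_parity (cc : G.Coloring (Fin 2)) :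
    ∀ {u v : V} (p : G.Walk u v), (Even p.length ↔ cc u = cc v) := by
  intro u v p
  induction p with
  | nil => simp
  | @cons u w v h q ih =>
      have hne : cc u ≠ cc w := cc.valid h
      have key : ∀ x y z : Fin 2, x ≠ y → (¬(y = z) ↔ x = z) := by decide
      rw [SimpleGraph.Walk.length_cons, Nat.even_add_one, ih]
      exact key _ _ _ hne

lemma force {u v : V} (P : G.Walk u v) (c : V → ℕ)
    (hc : ∀ i, i < P.length → c (P.getVert i) ≠ c (P.getVert (i+1)))
    {α β : ℕ} (hab : α ≠ β) (hu : c u = α) {n : ℕ} (hn : n ≤ P.length)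
    (hlist : ∀ i, 1 ≤ i → i ≤ n → c (P.getVert i) = α ∨ c (P.getVert i) = β) :
    ∀ i, i ≤ n → c (P.getVert i) = if Even i then α else β := by
  intro i
  induction i with
  | zero => intro _; simpa [P.getVert_zero] using hu
  | succ k ih =>
      intro hk
      have h1 := ih (by omega)
      have h2 := hc k (by omega)
      have h3 := hlist (k+1) (by omega) (by omega)
      by_cases hek : Even k
      · rw [if_pos hek] at h1
        rw [if_neg (by simp [Nat.even_add_one, hek])]
        rcases h3 with h3 | h3
        · exact (h2 (h1.trans h3.symm)).elim
        · exact h3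
      · rw [if_neg hek] at h1
        rw [if_pos (Nat.even_add_one.mpr hek)]
        rcases h3 with h3 | h3
        · exact h3
        · exact (h2 (h1.trans h3.symm)).elim

end DumbbellAux

open DumbbellAux

section Main

variable {V : Type} [Fintype V] [DecidableEq V]

/-- From a dumbbell in a bipartite graph, we extract three marking sets such that every
vertex is in exactly two of them, and no "proper coloring consistent with the lists"
exists. -/
lemma exists_bad_sets (G : SimpleGraph V) (hbip : G.Colorable 2)
    (hdb : PaintGame.HasDumbbell G) :
    ∃ M₁ M₂ M₃ : Finset V, M₁.Nonempty ∧ M₂.Nonempty ∧ M₃.Nonempty ∧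
      (∀ v, (if v ∈ M₁ then 1 else 0) + (if v ∈ M₂ then 1 else 0)
          + (if v ∈ M₃ then 1 else 0) = 2) ∧
      ∀ col : V → ℕ,
        (∀ v, (col v = 1 ∧ v ∈ M₁) ∨ (col v = 2 ∧ v ∈ M₂) ∨ (col v = 3 ∧ v ∈ M₃)) →
        ∃ x y, G.Adj x y ∧ col x = col y := by
  classical
  obtain ⟨cc⟩ := hbip
  obtain ⟨a, b, C, D, W, hC, hD, hW, hcd, hwc, hwd⟩ := hdb
  -- basic length facts
  obtain ⟨mh, hmh⟩ : Even C.length := (coloring_walk_parity cc C).mpr rfl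
  obtain ⟨nh, hnh⟩ : Even D.length := (coloring_walk_parity cc D).mpr rfl
  have hm3 : 3 ≤ C.length := hC.three_le_length
  have hn3 : 3 ≤ D.length := hD.three_le_length
  have hm4 : 4 ≤ C.length := by omega
  have hn4 : 4 ≤ D.length := by omega
  -- membership helpers
  have memC : ∀ i, i ≤ C.length → C.getVert i ∈ C.support := fun i hi =>
    SimpleGraph.Walk.mem_support_iff_exists_getVert.mpr ⟨i, rfl, hi⟩
  have memD : ∀ i, i ≤ D.length → D.getVert i ∈ D.support := fun i hi =>
    SimpleGraph.Walk.mem_support_iff_exists_getVert.mpr ⟨i, rfl, hi⟩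
  have memW : ∀ i, i ≤ W.length → W.getVert i ∈ W.support := fun i hi =>
    SimpleGraph.Walk.mem_support_iff_exists_getVert.mpr ⟨i, rfl, hi⟩
  -- injectivity helpers
  have injC : ∀ i j, 1 ≤ i → i ≤ C.length → 1 ≤ j → j ≤ C.length →
      C.getVert i = C.getVert j → i = j :=
    fun i j hi1 hi hj1 hj h => cycle_getVert_inj hC hi1 hi hj1 hj h
  have injD : ∀ i j, 1 ≤ i → i ≤ D.length → 1 ≤ j → j ≤ D.length →
      D.getVert i = D.getVert j → i = j :=
    fun i j hi1 hi hj1 hj h => cycle_getVert_inj hD hi1 hi hj1 hj h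
  have injW : ∀ i j, i ≤ W.length → j ≤ W.length →
      W.getVert i = W.getVert j → i = j :=
    fun i j hi hj h => path_getVert_inj hW hi hj h
  -- cross-structure disjointness facts
  have hCDfalse : ∀ i j, i ≤ C.length → 1 ≤ j → j ≤ D.length - 1 →
      C.getVert i = D.getVert j → False := by
    intro i j hi hj1 hj h
    have hmem : C.getVert i ∈ D.support := by rw [h]; exact memD j (by omega)
    have hx := hcd (C.getVert i) (memC i hi) hmem
    have hb : D.getVert j = D.getVert D.length := by
      rw [← h, hx.2]; exact D.getVert_length.symm
    have := injD j D.length hj1 (by omega) (by omega) le_rfl hb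
    omega
  have hWCzero : ∀ j i, j ≤ W.length → i ≤ C.length → W.getVert j = C.getVert i → j = 0 := by
    intro j i hj hi h
    have hxa : W.getVert j = a := hwc _ (memW j hj) (by rw [h]; exact memC i hi)
    have h0 : W.getVert j = W.getVert 0 := by rw [hxa, W.getVert_zero]
    exact injW j 0 hj (by omega) h0
  have hWDell : ∀ j i, j ≤ W.length → i ≤ D.length → W.getVert j = D.getVert i →
      j = W.length := by
    intro j i hj hi h
    have hxb : W.getVert j = b := hwd _ (memW j hj) (by rw [h]; exact memD i hi)
    have h0 : W.getVert j = W.getVert W.length := by rw [hxb, W.getVert_length]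
    exact injW j W.length hj le_rfl h0
  have haCfalse : ∀ i, 1 ≤ i → i ≤ C.length - 1 → a = C.getVert i → False := by
    intro i h1 h2 h
    have hh : C.getVert C.length = C.getVert i := by rw [C.getVert_length]; exact h
    have := injC C.length i (by omega) le_rfl h1 (by omega) hh
    omega
  have haDfalse : ∀ j, 1 ≤ j → j ≤ D.length - 1 → a = D.getVert j → False := by
    intro j h1 h2 h
    have hmem : a ∈ D.support := by rw [h]; exact memD j (by omega)
    have hab := hcd a C.start_mem_support hmem
    have hh : D.getVert j = D.getVert D.length := by
      rw [← h, hab.2]; exact D.getVert_length.symm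
    have := injD j D.length h1 (by omega) (by omega) le_rfl hh
    omega
  -- the list-code function
  set code : V → ℕ := fun v =>
    if v = C.getVert (C.length - 2) then 1
    else if v = C.getVert (C.length - 1) then 2
    else if v = D.getVert (D.length - 2) then (if Even W.length then 2 else 0)
    else if v = D.getVert (D.length - 1) then (if Even W.length then 0 else 2)
    else if ∃ i, 1 ≤ i ∧ i ≤ D.length - 3 ∧ v = D.getVert i then 1
    else if ∃ j, 1 ≤ j ∧ j ≤ W.length ∧ v = W.getVert j then 1
    else 0 with hcodedef
  -- code computations
  have code_a : code a = 0 := by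
    rw [hcodedef]
    simp only []
    rw [if_neg (fun h => haCfalse _ (by omega) (by omega) h),
        if_neg (fun h => haCfalse _ (by omega) (by omega) h),
        if_neg (fun h => haDfalse _ (by omega) (by omega) h),
        if_neg (fun h => haDfalse _ (by omega) (by omega) h),
        if_neg ?_, if_neg ?_]
    · rintro ⟨j, hj1, hj2, h⟩
      have h0 : W.getVert 0 = W.getVert j := by rw [W.getVert_zero]; exact h
      have := injW 0 j (by omega) hj2 h0
      omega
    · rintro ⟨i, hi1, hi2, h⟩
      exact haDfalse i hi1 (by omega) h
  have code_Ci : ∀ i, 1 ≤ i → i ≤ C.length - 3 → code (C.getVert i) = 0 := by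
    intro i hi1 hi2
    rw [hcodedef]
    simp only []
    rw [if_neg (fun h => absurd (injC i (C.length - 2) hi1 (by omega) (by omega)
          (by omega) h) (by omega)),
        if_neg (fun h => absurd (injC i (C.length - 1) hi1 (by omega) (by omega)
          (by omega) h) (by omega)),
        if_neg (fun h => hCDfalse i _ (by omega) (by omega) (by omega) h),
        if_neg (fun h => hCDfalse i _ (by omega) (by omega) (by omega) h),
        if_neg ?_, if_neg ?_]
    · rintro ⟨j, hj1, hj2, h⟩
      have := hWCzero j i hj2 (by omega) h.symm
      omega
    · rintro ⟨j, hj1, hj2, h⟩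
      exact hCDfalse i j (by omega) hj1 (by omega) h
  have code_Cm2 : code (C.getVert (C.length - 2)) = 1 := by
    rw [hcodedef]; simp only []; rw [if_pos trivial]
  have code_Cm1 : code (C.getVert (C.length - 1)) = 2 := by
    rw [hcodedef]; simp only []
    rw [if_neg (fun h => absurd (injC (C.length - 1) (C.length - 2) (by omega) (by omega)
          (by omega) (by omega) h) (by omega)),
        if_pos trivial]
  have hbDfalse : ∀ j i, 1 ≤ j → j ≤ W.length → 1 ≤ i → i ≤ D.length - 1 →
      W.getVert j = D.getVert i → False := by
    intro j i hj1 hj2 hi1 hi2 h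
    have hjl := hWDell j i hj2 (by omega) h
    have hh : D.getVert i = D.getVert D.length := by
      rw [← h, hjl, W.getVert_length, D.getVert_length]
    have := injD i D.length hi1 (by omega) (by omega) le_rfl hh
    omega
  have code_Wj : ∀ j, 1 ≤ j → j ≤ W.length → code (W.getVert j) = 1 := by
    intro j hj1 hj2
    rw [hcodedef]
    simp only []
    rw [if_neg (fun h => absurd (hWCzero j _ hj2 (by omega) h) (by omega)),
        if_neg (fun h => absurd (hWCzero j _ hj2 (by omega) h) (by omega)),
        if_neg (fun h => hbDfalse j _ hj1 hj2 (by omega) (by omega) h),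
        if_neg (fun h => hbDfalse j _ hj1 hj2 (by omega) (by omega) h),
        if_neg ?_, if_pos ⟨j, hj1, hj2, rfl⟩]
    rintro ⟨i, hi1, hi2, h⟩
    exact hbDfalse j i hj1 hj2 hi1 (by omega) h
  have code_Di : ∀ i, 1 ≤ i → i ≤ D.length - 3 → code (D.getVert i) = 1 := by
    intro i hi1 hi2
    rw [hcodedef]
    simp only []
    rw [if_neg (fun h => hCDfalse (C.length - 2) i (by omega) hi1 (by omega) h.symm),
        if_neg (fun h => hCDfalse (C.length - 1) i (by omega) hi1 (by omega) h.symm),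
        if_neg (fun h => absurd (injD i (D.length - 2) hi1 (by omega) (by omega)
          (by omega) h) (by omega)),
        if_neg (fun h => absurd (injD i (D.length - 1) hi1 (by omega) (by omega)
          (by omega) h) (by omega)),
        if_pos ⟨i, hi1, hi2, rfl⟩]
  have code_Dn2 : code (D.getVert (D.length - 2)) = (if Even W.length then 2 else 0) := by
    rw [hcodedef]
    simp only []
    rw [if_neg (fun h => hCDfalse (C.length - 2) _ (by omega) (by omega) (by omega) h.symm),
        if_neg (fun h => hCDfalse (C.length - 1) _ (by omega) (by omega) (by omega) h.symm),
        if_pos trivial]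
  have code_Dn1 : code (D.getVert (D.length - 1)) = (if Even W.length then 0 else 2) := by
    rw [hcodedef]
    simp only []
    rw [if_neg (fun h => hCDfalse (C.length - 2) _ (by omega) (by omega) (by omega) h.symm),
        if_neg (fun h => hCDfalse (C.length - 1) _ (by omega) (by omega) (by omega) h.symm),
        if_neg (fun h => absurd (injD (D.length - 1) (D.length - 2) (by omega) (by omega)
          (by omega) (by omega) h) (by omega)),
        if_pos trivial]
  have hrange : ∀ v, code v = 0 ∨ code v = 1 ∨ code v = 2 := by
    intro v
    rw [hcodedef]
    simp only []
    split_ifs <;> simp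
  -- the three marking sets
  refine ⟨Finset.univ.filter (fun v => code v = 0 ∨ code v = 2),
          Finset.univ.filter (fun v => code v = 0 ∨ code v = 1),
          Finset.univ.filter (fun v => code v = 1 ∨ code v = 2),
          ⟨C.getVert (C.length - 1), by simp [Finset.mem_filter, code_Cm1]⟩,
          ⟨C.getVert (C.length - 2), by simp [Finset.mem_filter, code_Cm2]⟩,
          ⟨C.getVert (C.length - 2), by simp [Finset.mem_filter, code_Cm2]⟩,
          ?_, ?_⟩
  · intro v
    rcases hrange v with h | h | h <;> simp [Finset.mem_filter, h]
  · intro col hcol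
    by_contra hne
    push_neg at hne
    have hlist0 : ∀ v, code v = 0 → col v = 1 ∨ col v = 2 := by
      intro v hv
      rcases hcol v with ⟨h, hm⟩ | ⟨h, hm⟩ | ⟨h, hm⟩ <;>
        simp only [Finset.mem_filter, Finset.mem_univ, true_and] at hm <;> omega
    have hlist1 : ∀ v, code v = 1 → col v = 2 ∨ col v = 3 := by
      intro v hv
      rcases hcol v with ⟨h, hm⟩ | ⟨h, hm⟩ | ⟨h, hm⟩ <;>
        simp only [Finset.mem_filter, Finset.mem_univ, true_and] at hm <;> omega
    have hlist2 : ∀ v, code v = 2 → col v = 1 ∨ col v = 3 := by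
      intro v hv
      rcases hcol v with ⟨h, hm⟩ | ⟨h, hm⟩ | ⟨h, hm⟩ <;>
        simp only [Finset.mem_filter, Finset.mem_univ, true_and] at hm <;> omega
    have cadjC : ∀ i, i < C.length → col (C.getVert i) ≠ col (C.getVert (i+1)) :=
      fun i hi => hne _ _ (C.adj_getVert_succ hi)
    have cadjD : ∀ i, i < D.length → col (D.getVert i) ≠ col (D.getVert (i+1)) :=
      fun i hi => hne _ _ (D.adj_getVert_succ hi)
    have cadjW : ∀ i, i < W.length → col (W.getVert i) ≠ col (W.getVert (i+1)) :=
      fun i hi => hne _ _ (W.adj_getVert_succ hi)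
    rcases hlist0 a code_a with hca | hca
    · -- col a = 1 : cycle C gives a contradiction
      have hodd : ¬ Even (C.length - 3) := by rw [Nat.even_iff]; omega
      have hforce := force C col cadjC (show (1:ℕ) ≠ 2 by norm_num) hca
        (show C.length - 3 ≤ C.length by omega)
        (fun i h1 h2 => hlist0 _ (code_Ci i h1 h2))
      have h1 : col (C.getVert (C.length - 3)) = 2 := by
        have := hforce (C.length - 3) le_rfl
        rwa [if_neg hodd] at this
      have h2 : col (C.getVert (C.length - 2)) = 3 := by
        have hx := hlist1 _ code_Cm2
        have hadj := cadjC (C.length - 3) (by omega)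
        rw [show C.length - 3 + 1 = C.length - 2 by omega] at hadj
        omega
      have h3 : col (C.getVert (C.length - 1)) = 3 := by
        have hy := hlist2 _ code_Cm1
        have hadj := cadjC (C.length - 1) (by omega)
        rw [show C.length - 1 + 1 = C.length by omega, C.getVert_length] at hadj
        omega
      have hadj := cadjC (C.length - 2) (by omega)
      rw [show C.length - 2 + 1 = C.length - 1 by omega] at hadj
      omega
    · -- col a = 2 : path pushes a forced color to b, then cycle D gives a contradiction
      have hcb : col b = (if Even W.length then 2 else 3) := by
        have hforce := force W col cadjW (show (2:ℕ) ≠ 3 by norm_num) hca le_rfl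
          (fun j h1 h2 => hlist1 _ (code_Wj j h1 h2))
        have := hforce W.length le_rfl
        rwa [W.getVert_length] at this
      have hoddD : ¬ Even (D.length - 3) := by rw [Nat.even_iff]; omega
      by_cases hEl : Even W.length
      · rw [if_pos hEl] at hcb
        have hforce := force D col cadjD (show (2:ℕ) ≠ 3 by norm_num) hcb
          (show D.length - 3 ≤ D.length by omega)
          (fun i h1 h2 => hlist1 _ (code_Di i h1 h2))
        have h1 : col (D.getVert (D.length - 3)) = 3 := by
          have := hforce (D.length - 3) le_rfl
          rwa [if_neg hoddD] at this
        have h2 : col (D.getVert (D.length - 2)) = 1 := by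
          have hx := hlist2 _ (by rw [code_Dn2, if_pos hEl])
          have hadj := cadjD (D.length - 3) (by omega)
          rw [show D.length - 3 + 1 = D.length - 2 by omega] at hadj
          omega
        have h3 : col (D.getVert (D.length - 1)) = 1 := by
          have hy := hlist0 _ (by rw [code_Dn1, if_pos hEl])
          have hadj := cadjD (D.length - 1) (by omega)
          rw [show D.length - 1 + 1 = D.length by omega, D.getVert_length] at hadj
          omega
        have hadj := cadjD (D.length - 2) (by omega)
        rw [show D.length - 2 + 1 = D.length - 1 by omega] at hadj
        omega
      · rw [if_neg hEl] at hcb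
        have hforce := force D col cadjD (show (3:ℕ) ≠ 2 by norm_num) hcb
          (show D.length - 3 ≤ D.length by omega)
          (fun i h1 h2 => (hlist1 _ (code_Di i h1 h2)).symm)
        have h1 : col (D.getVert (D.length - 3)) = 2 := by
          have := hforce (D.length - 3) le_rfl
          rwa [if_neg hoddD] at this
        have h2 : col (D.getVert (D.length - 2)) = 1 := by
          have hx := hlist0 _ (by rw [code_Dn2, if_neg hEl])
          have hadj := cadjD (D.length - 3) (by omega)
          rw [show D.length - 3 + 1 = D.length - 2 by omega] at hadj
          omega
        have h3 : col (D.getVert (D.length - 1)) = 1 := by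
          have hy := hlist2 _ (by rw [code_Dn1, if_neg hEl])
          have hadj := cadjD (D.length - 1) (by omega)
          rw [show D.length - 1 + 1 = D.length by omega, D.getVert_length] at hadj
          omega
        have hadj := cadjD (D.length - 2) (by omega)
        rw [show D.length - 2 + 1 = D.length - 1 by omega] at hadj
        omega

/-- A fixed "bad list assignment" (three marking sets covering each vertex twice, with no
rainbow-proper completion) defeats Painter in the three-round game. -/
lemma not_paintableIn_three (G : SimpleGraph V) (M₁ M₂ M₃ : Finset V)
    (h1 : M₁.Nonempty) (h2 : M₂.Nonempty) (h3 : M₃.Nonempty)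
    (hcount : ∀ v, (if v ∈ M₁ then 1 else 0) + (if v ∈ M₂ then 1 else 0)
        + (if v ∈ M₃ then 1 else 0) = 2)
    (hnocol : ∀ col : V → ℕ,
        (∀ v, (col v = 1 ∧ v ∈ M₁) ∨ (col v = 2 ∧ v ∈ M₂) ∨ (col v = 3 ∧ v ∈ M₃)) →
        ∃ x y, G.Adj x y ∧ col x = col y) :
    ¬ PaintGame.PaintableIn G (fun _ => 2) 3 := by
  intro hpaint
  unfold PaintGame.PaintableIn at hpaint
  simp only [PaintGame.PaintFromIn] at hpaint
  obtain ⟨X₁, hX₁, hI₁, hpaint⟩ := hpaint M₁ h1 (fun v _ => by norm_num)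
  obtain ⟨X₂, hX₂, hI₂, hpaint⟩ := hpaint M₂ h2 (by
    intro v hv
    simp only [PaintGame.decMark]
    split <;> omega)
  obtain ⟨X₃, hX₃, hI₃, hpaint⟩ := hpaint M₃ h3 (by
    intro v hv
    have hcv := hcount v
    simp only [PaintGame.decMark]
    by_cases hA : v ∈ M₁ <;> by_cases hB : v ∈ M₂ <;> simp [hA, hB, hv] at hcv ⊢)
  have hzero : ∀ v, PaintGame.decMark
      (PaintGame.decMark (PaintGame.decMark (fun _ => 2) M₁) M₂) M₃ v = 0 := by
    intro v
    have hcv := hcount v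
    simp only [PaintGame.decMark]
    by_cases hA : v ∈ M₁ <;> by_cases hB : v ∈ M₂ <;> by_cases hc3 : v ∈ M₃ <;>
      simp [hA, hB, hc3] at hcv ⊢
  rcases hpaint with hempty | ⟨v, hv⟩
  swap
  · exact hv (hzero v)
  -- everything got colored: extract a proper list coloring, contradiction
  have hcov : ∀ v, v ∉ X₁ → v ∉ X₂ → v ∈ X₃ := by
    intro v hv1 hv2
    by_contra hv3
    have : v ∈ ((Finset.univ \ X₁) \ X₂) \ X₃ := by
      simp [hv1, hv2, hv3]
    rw [hempty] at this
    simp at this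
  set col : V → ℕ := fun v => if v ∈ X₁ then 1 else if v ∈ X₂ then 2 else 3 with hcol
  have hmem1 : ∀ z, col z = 1 → z ∈ X₁ := by
    intro z hz; rw [hcol] at hz; simp only [] at hz
    split_ifs at hz with hA hB
    · exact hA
    · omega
    · omega
  have hmem2 : ∀ z, col z = 2 → z ∈ X₂ := by
    intro z hz; rw [hcol] at hz; simp only [] at hz
    split_ifs at hz with hA hB
    · omega
    · exact hB
    · omega
  have hmem3 : ∀ z, col z = 3 → z ∈ X₃ := by
    intro z hz; rw [hcol] at hz; simp only [] at hz
    split_ifs at hz with hA hB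
    · omega
    · omega
    · exact hcov z hA hB
  obtain ⟨x, y, hadj, hxy⟩ := hnocol col (by
    intro v
    rw [hcol]; simp only []
    split_ifs with hA hB
    · exact Or.inl ⟨rfl, (Finset.mem_inter.mp (hX₁ hA)).1⟩
    · exact Or.inr (Or.inl ⟨rfl, (Finset.mem_inter.mp (hX₂ hB)).1⟩)
    · exact Or.inr (Or.inr ⟨rfl, (Finset.mem_inter.mp (hX₃ (hcov v hA hB))).1⟩))
  have hval : col x = 1 ∨ col x = 2 ∨ col x = 3 := by
    rw [hcol]; simp only []; split_ifs <;> omega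
  rcases hval with h | h | h
  · exact hI₁ x (hmem1 x h) y (hmem1 y (by omega)) hadj
  · exact hI₂ x (hmem2 x h) y (hmem2 y (by omega)) hadj
  · exact hI₃ x (hmem3 x h) y (hmem3 y (by omega)) hadj

/-- A bipartite graph is `[2,2]`-paintable. -/
lemma paintableIn_two (G : SimpleGraph V) (hbip : G.Colorable 2) :
    PaintGame.PaintableIn G (fun _ => 2) 2 := by
  classical
  obtain ⟨cc⟩ := hbip
  unfold PaintGame.PaintableIn
  simp only [PaintGame.PaintFromIn]
  intro M₁ hne₁ hf₁
  refine ⟨M₁.filter (fun v => cc v = 0), by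
      intro v hv; simp only [Finset.mem_filter] at hv
      simp [hv.1], ?_, ?_⟩
  · intro u hu w hw hadj
    simp only [Finset.mem_filter] at hu hw
    exact cc.valid hadj (hu.2.trans hw.2.symm)
  · intro M₂ hne₂ hf₂
    refine ⟨(M₂ ∩ (Finset.univ \ M₁.filter (fun v => cc v = 0))).filter
        (fun v => cc v = 1), ?_, ?_, ?_⟩
    · intro v hv
      simp only [Finset.mem_filter] at hv
      exact hv.1
    · intro u hu w hw hadj
      simp only [Finset.mem_filter] at hu hw
      exact cc.valid hadj (hu.2.trans hw.2.symm)
    · by_cases hAll : ∀ v, v ∈ M₁ ∧ v ∈ M₂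
      · left
        rw [Finset.eq_empty_iff_forall_notMem]
        intro v hv
        rw [Finset.mem_sdiff] at hv
        obtain ⟨hv1, hv2⟩ := hv
        rw [Finset.mem_sdiff] at hv1
        obtain ⟨-, hvX1⟩ := hv1
        have hccv : cc v = 1 := by
          have h01 : ∀ x : Fin 2, x = 0 ∨ x = 1 := by decide
          rcases h01 (cc v) with h | h
          · exact absurd (Finset.mem_filter.mpr ⟨(hAll v).1, h⟩) hvX1
          · exact h
        exact hv2 (Finset.mem_filter.mpr ⟨Finset.mem_inter.mpr ⟨(hAll v).2,
          Finset.mem_sdiff.mpr ⟨Finset.mem_univ v, hvX1⟩⟩, hccv⟩)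
      · right
        push_neg at hAll
        obtain ⟨v, hv⟩ := hAll
        refine ⟨v, ?_⟩
        simp only [PaintGame.decMark]
        by_cases hA : v ∈ M₁ <;> by_cases hB : v ∈ M₂ <;> simp [hA, hB] <;> tauto

end Main

/-- Lemma `cycle2`.  If `G` is a bipartite graph that contains a
subgraph of the form `C_m·P_k·C_n` (two vertex-disjoint cycles joined by a path, cycles
sharing exactly one vertex when the path is trivial), then `m(G) = 3`. -/
theorem mval_eq_three_of_dumbbell {V : Type} [Fintype V] [DecidableEq V]
    (G : SimpleGraph V) (hbip : G.Colorable 2) (hdb : PaintGame.HasDumbbell G) :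
    PaintGame.mval G (fun _ => 2) = 3 := by
  classical
  obtain ⟨M₁, M₂, M₃, h1, h2, h3, hcount, hnocol⟩ := exists_bad_sets G hbip hdb
  have hB := not_paintableIn_three G M₁ M₂ M₃ h1 h2 h3 hcount hnocol
  have hA := paintableIn_two G hbip
  obtain ⟨a, -, -, -, -, -, -, -, -, -, -⟩ := hdb
  have h3S : 3 ∈ {t | (∀ v : V, (fun _ => 2) v ≤ t) ∧ ¬ PaintGame.PaintableIn G (fun _ => 2) t} :=
    ⟨fun v => by norm_num, hB⟩
  unfold PaintGame.mval
  apply le_antisymm (Nat.sInf_le h3S)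
  apply le_csInf ⟨3, h3S⟩
  rintro t ⟨hft, hnp⟩
  have h2t : 2 ≤ t := hft a
  have : t ≠ 2 := fun h => hnp (h ▸ hA)
  omega
end

section
/- If G is a bipartite graph that contains a subgraph θ_{p,q,r} with p ≥ 3 and q ≥ 3, then m(G) = 3. -/
open SimpleGraph PaintGame

/-! ### Auxiliary material for the proof -/

namespace ThetaAux

variable {V : Type} {G : SimpleGraph V}

lemma pfi_succ {V : Type} [DecidableEq V] (G : SimpleGraph V) (t : ℕ) (f : V → ℕ)
    (U : Finset V) :
    PaintFromIn G (t+1) f U ↔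
      ∀ M : Finset V, M.Nonempty → (∀ v ∈ M, 1 ≤ f v) →
        ∃ X : Finset V, X ⊆ M ∩ U ∧ IndepOn G X ∧
          PaintFromIn G t (decMark f M) (U \ X) := Iff.rfl

lemma pfi_one {V : Type} [DecidableEq V] (G : SimpleGraph V) (f : V → ℕ) (U : Finset V) :
    PaintFromIn G 1 f U ↔
      ∀ M : Finset V, M.Nonempty → (∀ v ∈ M, 1 ≤ f v) →
        ∃ X : Finset V, X ⊆ M ∩ U ∧ IndepOn G X ∧
          PaintFromIn G 0 (decMark f M) (U \ X) := Iff.rfl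

lemma pfi_two {V : Type} [DecidableEq V] (G : SimpleGraph V) (f : V → ℕ) (U : Finset V) :
    PaintFromIn G 2 f U ↔
      ∀ M : Finset V, M.Nonempty → (∀ v ∈ M, 1 ≤ f v) →
        ∃ X : Finset V, X ⊆ M ∩ U ∧ IndepOn G X ∧
          PaintFromIn G 1 (decMark f M) (U \ X) := Iff.rfl

lemma pfi_three {V : Type} [DecidableEq V] (G : SimpleGraph V) (f : V → ℕ) (U : Finset V) :
    PaintFromIn G 3 f U ↔
      ∀ M : Finset V, M.Nonempty → (∀ v ∈ M, 1 ≤ f v) →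
        ∃ X : Finset V, X ⊆ M ∩ U ∧ IndepOn G X ∧
          PaintFromIn G 2 (decMark f M) (U \ X) := Iff.rfl

lemma nat_sInf_eq_three {S : Set ℕ} (h3 : 3 ∈ S) (h2 : 2 ∉ S) (hlb : ∀ t ∈ S, 2 ≤ t) :
    sInf S = 3 := by
  have hmem := Nat.sInf_mem (⟨3, h3⟩ : S.Nonempty)
  have hle := Nat.sInf_le h3
  have hge := hlb _ hmem
  have hne : sInf S ≠ 2 := fun h => h2 (h ▸ hmem)
  omega

lemma pfi_zero {V : Type} [DecidableEq V] (G : SimpleGraph V) (f : V → ℕ) (U : Finset V) :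
    PaintFromIn G 0 f U ↔ (U = ∅ ∨ ∃ v, f v ≠ 0) := Iff.rfl

/-- On a path, `getVert` is injective on indices up to the length. -/
lemma path_getVert_inj : ∀ {u v : V} (W : G.Walk u v), W.IsPath →
    ∀ i j : ℕ, i ≤ W.length → j ≤ W.length → W.getVert i = W.getVert j → i = j := by
  intro u v W
  induction W with
  | nil =>
    intro _ i j hi hj _
    simp only [Walk.length_nil, Nat.le_zero] at hi hj
    omega
  | @cons a b c h q ih =>
    intro hp i j hi hj hij
    rw [Walk.cons_isPath_iff] at hp
    simp only [Walk.length_cons] at hi hj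
    match i, j with
    | 0, 0 => rfl
    | 0, j+1 =>
      exfalso
      apply hp.2
      rw [Walk.getVert_cons_succ, Walk.getVert_zero] at hij
      exact Walk.mem_support_iff_exists_getVert.2 ⟨j, hij.symm, by omega⟩
    | i+1, 0 =>
      exfalso
      apply hp.2
      rw [Walk.getVert_cons_succ, Walk.getVert_zero] at hij
      exact Walk.mem_support_iff_exists_getVert.2 ⟨i, hij, by omega⟩
    | i+1, j+1 =>
      rw [Walk.getVert_cons_succ, Walk.getVert_cons_succ] at hij
      have := ih hp.1 i j (by omega) (by omega) hij
      omega

lemma getVert_mem_support' {u v : V} (W : G.Walk u v) {i : ℕ} (hi : i ≤ W.length) :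
    W.getVert i ∈ W.support :=
  Walk.mem_support_iff_exists_getVert.2 ⟨i, rfl, hi⟩

/-- In a 2-colored graph, walk length parity matches the colors of the endpoints. -/
lemma coloring_walk_parity (C : G.Coloring (Fin 2)) :
    ∀ {a b : V} (W : G.Walk a b), ((C a).val + W.length) % 2 = (C b).val % 2 := by
  intro a b W
  induction W with
  | nil => simp
  | @cons x y z h q ih =>
    have hne : C x ≠ C y := C.valid h
    have hxy : (C x).val ≠ (C y).val := fun hv => hne (Fin.ext hv)
    have h1 : (C x).val < 2 := (C x).isLt
    have h2 : (C y).val < 2 := (C y).isLt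
    simp only [Walk.length_cons]
    omega

/-- Forcing chain along a path: if each internal vertex at position `i` is colored
`c (i-1)` or `c i`, consecutive `c`'s differ, and the start is colored `c 0`, then the
end is not colored `c (length - 1)`. -/
lemma chain_force {u v : V} (W : G.Walk u v) (χ : V → ℕ)
    (hproper : ∀ {x y : V}, G.Adj x y → χ x ≠ χ y)
    (c : ℕ → ℕ)
    (hmem : ∀ i : ℕ, i + 1 ≤ W.length - 1 →
      χ (W.getVert (i+1)) = c i ∨ χ (W.getVert (i+1)) = c (i+1))
    (h0 : χ u = c 0) (hlen : 1 ≤ W.length) :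
    χ v ≠ c (W.length - 1) := by
  have key : ∀ i : ℕ, i ≤ W.length - 1 → χ (W.getVert i) = c i := by
    intro i
    induction i with
    | zero => intro _; simpa [Walk.getVert_zero] using h0
    | succ n ih =>
      intro hn
      have h1 := ih (by omega)
      have hadj : G.Adj (W.getVert n) (W.getVert (n+1)) :=
        W.adj_getVert_succ (by omega)
      have hne := hproper hadj
      rcases hmem n hn with hc | hc
      · rw [h1] at hne; exact absurd hc hne.symm
      · exact hc
  have hlast := key (W.length - 1) le_rfl
  have hadj : G.Adj (W.getVert (W.length - 1)) (W.getVert W.length) := by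
    have hlt : W.length - 1 < W.length := by omega
    have := W.adj_getVert_succ hlt
    rwa [show W.length - 1 + 1 = W.length by omega] at this
  rw [Walk.getVert_length] at hadj
  intro hv
  exact hproper hadj (hlast.trans hv.symm)

/-- Alternation along a walk whose vertices are all colored `1` or `2`. -/
lemma alt_force {u v : V} (W : G.Walk u v) (χ : V → ℕ)
    (hproper : ∀ {x y : V}, G.Adj x y → χ x ≠ χ y)
    (hmem : ∀ i : ℕ, i ≤ W.length → χ (W.getVert i) = 1 ∨ χ (W.getVert i) = 2) :
    χ v = if W.length % 2 = 0 then χ u else 3 - χ u := by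
  have key : ∀ i : ℕ, i ≤ W.length →
      χ (W.getVert i) = if i % 2 = 0 then χ u else 3 - χ u := by
    intro i
    induction i with
    | zero => intro _; simp [Walk.getVert_zero]
    | succ n ih =>
      intro hn
      have h1 := ih (by omega)
      have hadj : G.Adj (W.getVert n) (W.getVert (n+1)) :=
        W.adj_getVert_succ (by omega)
      have hne := hproper hadj
      have ha := hmem n (by omega)
      have hb := hmem (n+1) hn
      have h0 : χ u = 1 ∨ χ u = 2 := by
        have := hmem 0 (by omega)
        rwa [Walk.getVert_zero] at this
      split_ifs at h1 ⊢ <;> omega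
  have := key W.length le_rfl
  rwa [Walk.getVert_length] at this

/-- The forcing chain of colors along a path of length `p`, starting at color
`s ∈ {1,2}`. -/
def chainc (p s : ℕ) : ℕ → ℕ := fun i =>
  if i = 0 then s
  else if i = p - 1 then (if p % 2 = 1 then 3 - s else s)
  else if i % 2 = 1 then 3 else 3 - s

lemma chainc_ne {p s : ℕ} (hs : s = 1 ∨ s = 2) (hp : 3 ≤ p) {i : ℕ}
    (hi0 : 0 < i) (hip : i < p) : chainc p s (i-1) ≠ chainc p s i := by
  unfold chainc
  split_ifs <;> omega

lemma chainc_mem {p s : ℕ} (hs : s = 1 ∨ s = 2) (i : ℕ) :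
    chainc p s i = 1 ∨ chainc p s i = 2 ∨ chainc p s i = 3 := by
  unfold chainc
  split_ifs <;> omega

lemma chainc_zero (p s : ℕ) : chainc p s 0 = s := by simp [chainc]

lemma chainc_one {p s : ℕ} (hp : 3 ≤ p) : chainc p s 1 = 3 := by
  have h1 : (1:ℕ) ≠ p - 1 := by omega
  simp [chainc, h1]

lemma chainc_last {p s : ℕ} (hp : 3 ≤ p) :
    chainc p s (p-1) = if p % 2 = 1 then 3 - s else s := by
  unfold chainc
  split_ifs <;> omega

open Classical in
/-- The list assignment used by Lister: forcing chains on the internal vertices of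
`P` and `Q`, and the list `{1,2}` everywhere else. -/
noncomputable def Lst {V : Type} (G : SimpleGraph V) {u v : V} (P Q : G.Walk u v)
    (x : V) : Finset ℕ :=
  if h : ∃ i, 0 < i ∧ i < P.length ∧ P.getVert i = x then
    {chainc P.length 1 (h.choose - 1), chainc P.length 1 h.choose}
  else if h : ∃ i, 0 < i ∧ i < Q.length ∧ Q.getVert i = x then
    {chainc Q.length 2 (h.choose - 1), chainc Q.length 2 h.choose}
  else {1, 2}

lemma Lst_P {u v : V} {P Q : G.Walk u v} (hP : P.IsPath) {j : ℕ}
    (hj0 : 0 < j) (hjp : j < P.length) :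
    Lst G P Q (P.getVert j) = {chainc P.length 1 (j-1), chainc P.length 1 j} := by
  have hc : ∃ i, 0 < i ∧ i < P.length ∧ P.getVert i = P.getVert j := ⟨j, hj0, hjp, rfl⟩
  rw [Lst, dif_pos hc]
  have hspec := hc.choose_spec
  have : hc.choose = j :=
    path_getVert_inj P hP _ _ (le_of_lt hspec.2.1) (le_of_lt hjp) hspec.2.2
  rw [this]

lemma Lst_Q {u v : V} {P Q : G.Walk u v} (hQ : Q.IsPath)
    (hPQ : ∀ x, x ∈ P.support → x ∈ Q.support → x = u ∨ x = v) {j : ℕ}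
    (hj0 : 0 < j) (hjq : j < Q.length) :
    Lst G P Q (Q.getVert j) = {chainc Q.length 2 (j-1), chainc Q.length 2 j} := by
  have hnP : ¬ ∃ i, 0 < i ∧ i < P.length ∧ P.getVert i = Q.getVert j := by
    rintro ⟨i, hi0, hip, hx⟩
    have hmemP : Q.getVert j ∈ P.support := hx ▸ getVert_mem_support' P (le_of_lt hip)
    have hmemQ : Q.getVert j ∈ Q.support := getVert_mem_support' Q (le_of_lt hjq)
    rcases hPQ _ hmemP hmemQ with h | h
    · have : j = 0 := by
        apply path_getVert_inj Q hQ j 0 (le_of_lt hjq) (by omega)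
        rw [Walk.getVert_zero, h]
      omega
    · have : j = Q.length := by
        apply path_getVert_inj Q hQ j Q.length (le_of_lt hjq) le_rfl
        rw [Walk.getVert_length, h]
      omega
  have hc : ∃ i, 0 < i ∧ i < Q.length ∧ Q.getVert i = Q.getVert j := ⟨j, hj0, hjq, rfl⟩
  rw [Lst, dif_neg hnP, dif_pos hc]
  have hspec := hc.choose_spec
  have : hc.choose = j :=
    path_getVert_inj Q hQ _ _ (le_of_lt hspec.2.1) (le_of_lt hjq) hspec.2.2
  rw [this]

lemma Lst_other {u v : V} {P Q : G.Walk u v} (x : V)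
    (h1 : ¬ ∃ i, 0 < i ∧ i < P.length ∧ P.getVert i = x)
    (h2 : ¬ ∃ i, 0 < i ∧ i < Q.length ∧ Q.getVert i = x) :
    Lst G P Q x = {1, 2} := by
  rw [Lst, dif_neg h1, dif_neg h2]

/-- Every list consists of two distinct colors from `{1,2,3}`. -/
lemma Lst_pair {u v : V} {P Q : G.Walk u v} (hp : 3 ≤ P.length) (hq : 3 ≤ Q.length)
    (x : V) :
    ∃ a b : ℕ, a ≠ b ∧ (a = 1 ∨ a = 2 ∨ a = 3) ∧ (b = 1 ∨ b = 2 ∨ b = 3) ∧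
      Lst G P Q x = {a, b} := by
  rw [Lst]
  split_ifs with h1 h2
  · obtain ⟨hi0, hip, _⟩ := h1.choose_spec
    exact ⟨_, _, chainc_ne (Or.inl rfl) hp hi0 hip, chainc_mem (Or.inl rfl) _,
      chainc_mem (Or.inl rfl) _, rfl⟩
  · obtain ⟨hi0, hip, _⟩ := h2.choose_spec
    exact ⟨_, _, chainc_ne (Or.inr rfl) hq hi0 hip, chainc_mem (Or.inr rfl) _,
      chainc_mem (Or.inr rfl) _, rfl⟩
  · exact ⟨1, 2, by omega, by omega, by omega, rfl⟩

end ThetaAux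

open ThetaAux

/-- Lemma `theta1`.  If `G` is a bipartite graph that contains a
subgraph `θ_{p,q,r}` with `p ≥ 3` and `q ≥ 3`, then `m(G) = 3`. -/
theorem mval_eq_three_of_theta {V : Type} [Fintype V] [DecidableEq V]
    (G : SimpleGraph V) (hbip : G.Colorable 2) (p q r : ℕ) (hp : 3 ≤ p) (hq : 3 ≤ q)
    (hθ : PaintGame.HasTheta G p q r) :
    PaintGame.mval G (fun _ => 2) = 3 := by
  classical
  obtain ⟨u, v, P, Q, R, hP, hQ, hR, hPl, hQl, hRl, hPQ, hPR, hQR⟩ := hθ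
  subst hPl; subst hQl; subst hRl
  obtain ⟨C⟩ := hbip
  -- parity facts
  have hparPR : P.length % 2 = R.length % 2 := by
    have h1 := coloring_walk_parity C P
    have h2 := coloring_walk_parity C R
    omega
  have hparQR : Q.length % 2 = R.length % 2 := by
    have h1 := coloring_walk_parity C Q
    have h2 := coloring_walk_parity C R
    omega
  -- ## Part 1 : Painter wins the 2-round game
  have hpaint2 : PaintableIn G (fun _ => 2) 2 := by
    rw [PaintableIn, pfi_two]
    intro M₁ _ _
    refine ⟨M₁.filter (fun x => C x = 0), ?_, ?_, ?_⟩
    · intro x hx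
      simp only [Finset.mem_filter] at hx
      simp [hx.1]
    · intro x hx y hy hadj
      simp only [Finset.mem_filter] at hx hy
      exact C.valid hadj (hx.2.trans hy.2.symm)
    · rw [pfi_one]
      intro M₂ _ _
      set X₁ : Finset V := M₁.filter (fun x => C x = 0) with hX₁def
      set U₁ : Finset V := Finset.univ \ X₁ with hU₁def
      refine ⟨(M₂ ∩ U₁).filter (fun x => C x = 1), Finset.filter_subset _ _, ?_, ?_⟩
      · intro x hx y hy hadj
        simp only [Finset.mem_filter] at hx hy
        exact C.valid hadj (hx.2.trans hy.2.symm)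
      · rw [pfi_zero]
        by_cases hall : ∀ x : V, x ∈ M₁ ∧ x ∈ M₂
        · left
          ext x
          simp only [Finset.mem_sdiff, Finset.notMem_empty, iff_false, not_and]
          intro hx
          obtain ⟨hxU₁, hxX₁⟩ := Finset.mem_sdiff.1 hx
          by_cases h0 : C x = 0
          · exact absurd (Finset.mem_filter.2 ⟨(hall x).1, h0⟩) hxX₁
          · have h1 : C x = 1 := by
              have hlt := (C x).isLt
              have h0' : (C x).val ≠ 0 := fun hh => h0 (Fin.ext hh)
              exact Fin.ext (by omega)
            intro hc
            exact hc (Finset.mem_filter.2 ⟨Finset.mem_inter.2 ⟨(hall x).2, hx⟩, h1⟩)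
        · right
          push_neg at hall
          obtain ⟨x, hx⟩ := hall
          refine ⟨x, ?_⟩
          by_cases hm1 : x ∈ M₁ <;> by_cases hm2 : x ∈ M₂ <;>
            simp only [decMark, hm1, hm2, if_pos, if_neg, if_true, if_false] <;>
            simp_all
  -- ## Part 2 : Lister wins the 3-round game
  have hnot3 : ¬ PaintableIn G (fun _ => 2) 3 := by
    intro hpaint
    rw [PaintableIn, pfi_three] at hpaint
    set L : V → Finset ℕ := Lst G P Q with hLdef
    set Mk : ℕ → Finset V := fun j => Finset.univ.filter (fun x => j ∈ L x) with hMkdef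
    have hmemM : ∀ (j : ℕ) (x : V), x ∈ Mk j ↔ j ∈ L x := by
      intro j x; simp [hMkdef]
    -- lists of the various vertices
    have hLu : L u = {1, 2} := by
      rw [hLdef]
      refine Lst_other u ?_ ?_
      · rintro ⟨i, hi0, hip, hx⟩
        have : i = 0 := path_getVert_inj P hP i 0 (le_of_lt hip) (by omega)
          (by rw [hx, Walk.getVert_zero])
        omega
      · rintro ⟨i, hi0, hip, hx⟩
        have : i = 0 := path_getVert_inj Q hQ i 0 (le_of_lt hip) (by omega)
          (by rw [hx, Walk.getVert_zero])
        omega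
    have hLv : L v = {1, 2} := by
      rw [hLdef]
      refine Lst_other v ?_ ?_
      · rintro ⟨i, hi0, hip, hx⟩
        have : i = P.length := path_getVert_inj P hP i P.length (le_of_lt hip) le_rfl
          (by rw [hx, Walk.getVert_length])
        omega
      · rintro ⟨i, hi0, hip, hx⟩
        have : i = Q.length := path_getVert_inj Q hQ i Q.length (le_of_lt hip) le_rfl
          (by rw [hx, Walk.getVert_length])
        omega
    have hLP : ∀ j : ℕ, 0 < j → j < P.length →
        L (P.getVert j) = {chainc P.length 1 (j-1), chainc P.length 1 j} :=
      fun j h1 h2 => Lst_P hP h1 h2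
    have hLQ : ∀ j : ℕ, 0 < j → j < Q.length →
        L (Q.getVert j) = {chainc Q.length 2 (j-1), chainc Q.length 2 j} :=
      fun j h1 h2 => Lst_Q hQ hPQ h1 h2
    have hLR : ∀ j : ℕ, 0 < j → j < R.length → L (R.getVert j) = {1, 2} := by
      intro j hj0 hjr
      rw [hLdef]
      refine Lst_other _ ?_ ?_
      · rintro ⟨i, hi0, hip, hx⟩
        have hmemP : R.getVert j ∈ P.support := hx ▸ getVert_mem_support' P (le_of_lt hip)
        have hmemR : R.getVert j ∈ R.support := getVert_mem_support' R (le_of_lt hjr)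
        rcases hPR _ hmemP hmemR with h | h
        · have : j = 0 := path_getVert_inj R hR j 0 (le_of_lt hjr) (by omega)
            (by rw [h, Walk.getVert_zero])
          omega
        · have : j = R.length := path_getVert_inj R hR j R.length (le_of_lt hjr) le_rfl
            (by rw [h, Walk.getVert_length])
          omega
      · rintro ⟨i, hi0, hip, hx⟩
        have hmemQ : R.getVert j ∈ Q.support := hx ▸ getVert_mem_support' Q (le_of_lt hip)
        have hmemR : R.getVert j ∈ R.support := getVert_mem_support' R (le_of_lt hjr)
        rcases hQR _ hmemQ hmemR with h | h
        · have : j = 0 := path_getVert_inj R hR j 0 (le_of_lt hjr) (by omega)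
            (by rw [h, Walk.getVert_zero])
          omega
        · have : j = R.length := path_getVert_inj R hR j R.length (le_of_lt hjr) le_rfl
            (by rw [h, Walk.getVert_length])
          omega
    have hLpair : ∀ x : V, ∃ a b : ℕ, a ≠ b ∧ (a = 1 ∨ a = 2 ∨ a = 3) ∧
        (b = 1 ∨ b = 2 ∨ b = 3) ∧ L x = {a, b} := by
      intro x
      rw [hLdef]
      exact Lst_pair hp hq x
    -- every vertex is in exactly two of the three marked sets
    have key : ∀ x : V, (x ∈ Mk 1 ∧ x ∈ Mk 2 ∧ x ∉ Mk 3) ∨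
        (x ∈ Mk 1 ∧ x ∉ Mk 2 ∧ x ∈ Mk 3) ∨ (x ∉ Mk 1 ∧ x ∈ Mk 2 ∧ x ∈ Mk 3) := by
      intro x
      obtain ⟨a, b, hab, ha, hb, hLx⟩ := hLpair x
      have e1 : (x ∈ Mk 1) ↔ (1 = a ∨ 1 = b) := by rw [hmemM, hLx]; simp
      have e2 : (x ∈ Mk 2) ↔ (2 = a ∨ 2 = b) := by rw [hmemM, hLx]; simp
      have e3 : (x ∈ Mk 3) ↔ (3 = a ∨ 3 = b) := by rw [hmemM, hLx]; simp
      rw [e1, e2, e3]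
      omega
    have huM₁ : u ∈ Mk 1 := by rw [hmemM, hLu]; simp
    have huM₂ : u ∈ Mk 2 := by rw [hmemM, hLu]; simp
    -- Round 1
    obtain ⟨X₁, hX₁sub, hX₁ind, h2⟩ := hpaint (Mk 1) ⟨u, huM₁⟩ (fun x _ => by norm_num)
    rw [pfi_two] at h2
    -- Round 2
    obtain ⟨X₂, hX₂sub, hX₂ind, h1⟩ := h2 (Mk 2) ⟨u, huM₂⟩
      (fun x _ => by simp only [decMark]; split_ifs <;> omega)
    rw [pfi_one] at h1
    -- Round 3
    have hw₃ : P.getVert 1 ∈ Mk 3 := by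
      rw [hmemM, hLP 1 (by omega) (by omega)]
      simp [chainc_one hp]
    obtain ⟨X₃, hX₃sub, hX₃ind, h0⟩ := h1 (Mk 3) ⟨P.getVert 1, hw₃⟩
      (fun x hx => by
        rcases key x with ⟨k1, k2, k3⟩ | ⟨k1, k2, k3⟩ | ⟨k1, k2, k3⟩ <;>
          simp only [decMark, k1, k2, if_pos, if_neg, if_true, if_false] <;>
          first
            | omega
            | (exact absurd hx k3))
    rw [pfi_zero] at h0
    rcases h0 with hU | ⟨w, hw⟩
    · -- Painter colored everything : extract a proper coloring from the lists
      set χ : V → ℕ := fun x => if x ∈ X₁ then 1 else if x ∈ X₂ then 2 else 3 with hχdef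
      have hX3 : ∀ z : V, z ∉ X₁ → z ∉ X₂ → z ∈ X₃ := by
        intro z h1' h2'
        by_contra h3'
        have hz : z ∈ ((Finset.univ \ X₁) \ X₂) \ X₃ := by
          simp [h1', h2', h3']
        rw [hU] at hz
        simp at hz
      have hproper : ∀ {x y : V}, G.Adj x y → χ x ≠ χ y := by
        intro x y hadj heq
        rw [hχdef] at heq
        simp only at heq
        by_cases hx1 : x ∈ X₁ <;> by_cases hy1 : y ∈ X₁ <;>
          by_cases hx2 : x ∈ X₂ <;> by_cases hy2 : y ∈ X₂ <;>
          simp only [hx1, hy1, hx2, hy2, if_pos, if_neg, if_true, if_false] at heq <;>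
          first
            | omega
            | exact hX₁ind x hx1 y hy1 hadj
            | exact hX₂ind x hx2 y hy2 hadj
            | exact hX₃ind x (hX3 x hx1 hx2) y (hX3 y hy1 hy2) hadj
      have hχL : ∀ x : V, χ x ∈ L x := by
        intro x
        rw [hχdef]
        simp only
        split_ifs with h1' h2'
        · have := Finset.mem_inter.1 (hX₁sub h1')
          exact (hmemM 1 x).1 this.1
        · have := Finset.mem_inter.1 (hX₂sub h2')
          exact (hmemM 2 x).1 this.1
        · have := Finset.mem_inter.1 (hX₃sub (hX3 x h1' h2'))
          exact (hmemM 3 x).1 this.1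
      have hχu : χ u = 1 ∨ χ u = 2 := by
        have := hχL u; rw [hLu] at this; simpa using this
      have hχv : χ v = 1 ∨ χ v = 2 := by
        have := hχL v; rw [hLv] at this; simpa using this
      have hRalt : χ v = if R.length % 2 = 0 then χ u else 3 - χ u := by
        refine alt_force R χ hproper ?_
        intro i hi
        rcases Nat.eq_or_lt_of_le hi with hil | hil
        · rw [hil, Walk.getVert_length]; exact hχv
        · rcases Nat.eq_zero_or_pos i with hi0 | hi0
          · rw [hi0, Walk.getVert_zero]; exact hχu
          · have := hχL (R.getVert i)
            rw [hLR i hi0 hil] at this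
            simpa using this
      rcases hχu with hcu | hcu
      · -- χ u = 1 : forcing chain along P
        have hPforce : χ v ≠ chainc P.length 1 (P.length - 1) := by
          refine chain_force P χ hproper (chainc P.length 1) ?_ ?_ (by omega)
          · intro i hi
            have := hχL (P.getVert (i+1))
            rw [hLP (i+1) (by omega) (by omega)] at this
            simpa using this
          · rw [chainc_zero]; exact hcu
        rw [chainc_last hp] at hPforce
        by_cases hro : R.length % 2 = 0 <;> by_cases hpo : P.length % 2 = 1 <;>
          simp only [hro, hpo, if_pos, if_neg, if_true, if_false] at hRalt hPforce <;>
          omega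
      · -- χ u = 2 : forcing chain along Q
        have hQforce : χ v ≠ chainc Q.length 2 (Q.length - 1) := by
          refine chain_force Q χ hproper (chainc Q.length 2) ?_ ?_ (by omega)
          · intro i hi
            have := hχL (Q.getVert (i+1))
            rw [hLQ (i+1) (by omega) (by omega)] at this
            simpa using this
          · rw [chainc_zero]; exact hcu
        rw [chainc_last hq] at hQforce
        by_cases hro : R.length % 2 = 0 <;> by_cases hqo : Q.length % 2 = 1 <;>
          simp only [hro, hqo, if_pos, if_neg, if_true, if_false] at hRalt hQforce <;>
          omega
    · -- some vertex was marked fewer than twice : impossible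
      apply hw
      rcases key w with ⟨k1, k2, k3⟩ | ⟨k1, k2, k3⟩ | ⟨k1, k2, k3⟩ <;>
        simp [decMark, k1, k2, k3]
  -- ## Conclusion
  rw [PaintGame.mval]
  refine nat_sInf_eq_three ⟨fun _ => by norm_num, hnot3⟩ ?_ ?_
  · rintro ⟨-, hnp⟩
    exact hnp hpaint2
  · rintro t ⟨hlb, -⟩
    exact hlb u
end

section
/- If G is a bipartite graph that contains a subgraph θ_{2,2,2n} with n ≥ 2, then m(G) = 3. -/
open SimpleGraph PaintGame

/-! A proper 2-colouring lets Painter win the `[2,2]` game by colouring one colour class per round.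
In the `[2,3]` game on `θ_{2,2,2n}` with branch vertices `u, v`, middle vertices `a, b` of the
short paths and neighbours `y₁, y₂` of `u, v` on the long path, Lister first marks
`u, v, a, y₁, y₂`. In the last two rounds Lister can then force Painter to properly 2-colour all
uncoloured vertices, with prescribed colours on the once-marked ones. Whatever independent set
Painter coloured first, two once-marked uncoloured vertices are joined through uncoloured vertices
by a walk (the rest of the long path, an edge at `a`, or `u b v`), and Lister prescribes colours
violating its parity. -/

namespace SimpleGraph.Walk

variable {V : Type} {G : SimpleGraph V}

theorem mem_iff_mem_iff_even_length {S U : Set V}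
    (hS : ∀ p ∈ U, ∀ q ∈ U, G.Adj p q → (p ∈ S ↔ q ∉ S)) :
    ∀ {x y : V} (W : G.Walk x y), (∀ w ∈ W.support, w ∈ U) →
      ((x ∈ S ↔ y ∈ S) ↔ Even W.length)
  | _, _, .nil, _ => by simp
  | _, _, .cons h W, hW => by
    have hxy := hS _ (hW _ (by simp)) _ (hW _ (by simp)) h
    have ih := W.mem_iff_mem_iff_even_length hS fun w hw => hW w (by simp [hw])
    rw [length_cons, Nat.even_add_one]
    tauto

theorem exists_eq_cons_cons_nil_of_length_eq_two {u v : V} (P : G.Walk u v)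
    (hP : P.length = 2) :
    ∃ a, ∃ (h₁ : G.Adj u a) (h₂ : G.Adj a v), P = cons h₁ (cons h₂ nil) := by
  rcases P with _ | ⟨h₁, _ | ⟨h₂, _ | _⟩⟩ <;> simp_all

theorem exists_eq_cons_concat_of_two_le_length {u v : V} (R : G.Walk u v)
    (hR : 2 ≤ R.length) :
    ∃ y₁ y₂, ∃ (h₁ : G.Adj u y₁) (T : G.Walk y₁ y₂) (h₂ : G.Adj y₂ v),
      R = cons h₁ (T.concat h₂) := by
  rcases R with _ | ⟨h₁, _ | ⟨h, R⟩⟩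
  · simp at hR
  · simp at hR
  · obtain ⟨y₂, T, h₂, hT⟩ := exists_cons_eq_concat h R
    exact ⟨_, y₂, h₁, T, h₂, by rw [hT]⟩

end SimpleGraph.Walk

namespace PaintGame

variable {V : Type} [DecidableEq V] {G : SimpleGraph V}

theorem paintFromIn_of_lt_s9 {r : ℕ} {f : V → ℕ} {v : V} (hv : r < f v) (U : Finset V) :
    PaintFromIn G r f U := by
  induction r generalizing f U with
  | zero => exact Or.inr ⟨v, by omega⟩
  | succ r ih =>
    intro M _ _
    refine ⟨∅, Finset.empty_subset _, by simp [IndepOn], ih ?_ _⟩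
    unfold decMark
    split_ifs <;> omega

theorem paintFromIn_of_coloring {k : ℕ} (c : G.Coloring (Fin k)) :
    ∀ (r : ℕ) (f : V → ℕ) (U : Finset V), (∀ v, r ≤ f v) → (∀ v ∈ U, (c v : ℕ) < r) →
      PaintFromIn G r f U
  | 0, f, U, _, hU => Or.inl (Finset.eq_empty_of_forall_notMem fun v hv => by
      have := hU v hv; omega)
  | r + 1, f, U, hf, hU => by
    intro M _ _
    refine ⟨(M ∩ U).filter fun v => (c v : ℕ) = r, Finset.filter_subset _ _, ?_, ?_⟩
    · intro p hp q hq hpq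
      simp only [Finset.mem_filter] at hp hq
      exact c.valid hpq (Fin.ext (hp.2.trans hq.2.symm))
    -- a vertex that Lister skips keeps more marks than there are rounds left
    by_cases hM : ∀ v, v ∈ M
    · refine paintFromIn_of_coloring c r _ _ (fun v => ?_) (fun v hv => ?_)
      · have := hf v
        simp only [decMark, if_pos (hM v)]
        omega
      · simp only [Finset.mem_sdiff, Finset.mem_filter, Finset.mem_inter, not_and] at hv
        have := hU v hv.1
        have := hv.2 ⟨hM v, hv.1⟩
        omega
    · push Not at hM
      obtain ⟨v, hv⟩ := hM
      refine paintFromIn_of_lt_s9 (v := v) ?_ _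
      have := hf v
      simp only [decMark, if_neg hv]
      omega

theorem paintableIn_of_colorable [Fintype V] {k : ℕ} (hG : G.Colorable k) :
    PaintableIn G (fun _ => k) k :=
  let ⟨c⟩ := hG
  paintFromIn_of_coloring c k _ _ (fun _ => le_rfl) fun v _ => (c v).isLt

/-- Lister marks `(M \ S)ᶜ` and then `Sᶜ`. -/
theorem exists_bipartition_of_paintFromIn_two [Fintype V] {M S U : Finset V} {z : V}
    (hz : z ∉ M) (hS : S ⊆ M) (h : PaintFromIn G 2 (decMark (fun _ => 2) M) U) :
    ∃ X : Finset V, (∀ v ∈ U, v ∈ M → (v ∈ X ↔ v ∈ S)) ∧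
      ∀ p ∈ U, ∀ q ∈ U, G.Adj p q → (p ∈ X ↔ q ∉ X) := by
  obtain ⟨X₂, hX₂, hind₂, h1⟩ := h (Finset.univ \ (M \ S)) ⟨z, by simp [hz]⟩
    (fun v _ => by simp only [decMark]; split_ifs <;> omega)
  obtain ⟨X₃, hX₃, hind₃, h0⟩ := h1 (Finset.univ \ S) ⟨z, by simpa using fun h => hz (hS h)⟩
    (fun v hv => by
      simp only [decMark, Finset.mem_sdiff, Finset.mem_univ, true_and] at hv ⊢
      split_ifs <;> tauto)
  have hcover : (U \ X₂) \ X₃ = ∅ := h0.resolve_right fun ⟨v, hv⟩ => hv (by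
    simp only [decMark, Finset.mem_sdiff, Finset.mem_univ, true_and]
    split_ifs <;> first | omega | tauto)
  have hcover' : ∀ v ∈ U, v ∉ X₂ → v ∈ X₃ := fun v hv hv₂ => by
    by_contra hv₃
    exact Finset.notMem_empty v (hcover ▸ by simp [hv, hv₂, hv₃])
  refine ⟨X₂, fun v hv hvM => ⟨fun hv₂ => ?_, fun hvS => ?_⟩, fun p hp q hq hpq => ⟨?_, ?_⟩⟩
  · have := (Finset.mem_inter.mp (hX₂ hv₂)).1
    simp only [Finset.mem_sdiff, Finset.mem_univ, true_and, not_and, not_not] at this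
    exact this hvM
  · by_contra hv₂
    have := (Finset.mem_inter.mp (hX₃ (hcover' v hv hv₂))).1
    simp [hvS] at this
  · exact fun hp₂ hq₂ => hind₂ p hp₂ q hq₂ hpq
  · intro hq₂
    by_contra hp₂
    exact hind₃ p (hcover' p hp hp₂) q (hcover' q hq hq₂) hpq

theorem not_paintFromIn_two_of_walk [Fintype V] {M U : Finset V} {x y z : V} (hz : z ∉ M)
    (hx : x ∈ M) (hy : y ∈ M) (W : G.Walk x y) (hW : ∀ w ∈ W.support, w ∈ U)
    (hxy : Even W.length → x ≠ y) : ¬ PaintFromIn G 2 (decMark (fun _ => 2) M) U := by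
  intro h
  have hxU : x ∈ U := hW x W.start_mem_support
  have hyU : y ∈ U := hW y W.end_mem_support
  by_cases heven : Even W.length
  · obtain ⟨X, hXS, hX⟩ := exists_bipartition_of_paintFromIn_two (S := {x}) hz (by simpa) h
    have hparity := W.mem_iff_mem_iff_even_length (S := (X : Set V)) hX hW
    have hxX : x ∈ X := (hXS x hxU hx).mpr (Finset.mem_singleton_self x)
    have hyX : y ∉ X := fun hyX =>
      hxy heven (Finset.mem_singleton.mp ((hXS y hyU hy).mp hyX)).symm
    exact hyX ((hparity.mpr heven).mp hxX)
  · obtain ⟨X, hXS, hX⟩ := exists_bipartition_of_paintFromIn_two (S := {x, y}) hz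
      (by simp [Finset.insert_subset_iff, hx, hy]) h
    have hparity := W.mem_iff_mem_iff_even_length (S := (X : Set V)) hX hW
    have hxX : x ∈ X := (hXS x hxU hx).mpr (by simp)
    have hyX : y ∈ X := (hXS y hyU hy).mpr (by simp)
    exact heven (hparity.mp ⟨fun _ => hyX, fun _ => hxX⟩)

theorem HasTheta.exists_frame {n : ℕ} (hn : 2 ≤ n) (hθ : HasTheta G 2 2 (2 * n)) :
    ∃ u v a b y₁ y₂ : V, ∃ T : G.Walk y₁ y₂, G.Adj u a ∧ G.Adj a v ∧ G.Adj u b ∧ G.Adj b v ∧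
      G.Adj u y₁ ∧ G.Adj y₂ v ∧ b ∉ ({u, v, a, y₁, y₂} : Finset V) ∧ u ≠ v ∧ y₁ ≠ y₂ ∧
      Even T.length ∧ u ∉ T.support ∧ v ∉ T.support := by
  obtain ⟨u, v, P, Q, R, hP, -, hR, hPl, hQl, hRl, hPQ, -, hQR⟩ := hθ
  obtain ⟨a, hua, hav, rfl⟩ := P.exists_eq_cons_cons_nil_of_length_eq_two hPl
  obtain ⟨b, hub, hbv, rfl⟩ := Q.exists_eq_cons_cons_nil_of_length_eq_two hQl
  obtain ⟨y₁, y₂, huy, T, hyv, rfl⟩ := R.exists_eq_cons_concat_of_two_le_length (by omega)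
  simp only [Walk.cons_isPath_iff, Walk.concat_isPath_iff, Walk.support_cons,
    Walk.support_concat, Walk.support_nil, List.mem_cons, List.mem_append] at hP hR hPQ hQR
  simp only [Walk.length_cons, Walk.length_concat] at hRl
  have hbu : b ≠ u := hub.ne.symm
  have hbv' : b ≠ v := hbv.ne
  have hy : y₁ ≠ y₂ := by
    rintro rfl
    have := Walk.length_eq_zero_iff.mpr (Walk.isPath_iff_nil.mp hR.1.1)
    omega
  refine ⟨u, v, a, b, y₁, y₂, T, hua, hav, hub, hbv, huy, hyv, ?_,
    fun huv => hP.2 (by simp [huv]), hy, ⟨n - 1, by omega⟩, fun hu => hR.2 (Or.inl hu), hR.1.2⟩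
  simp only [Finset.mem_insert, Finset.mem_singleton, not_or]
  refine ⟨hbu, hbv', fun hba => ?_, fun hby => ?_, fun hby => ?_⟩
  · rcases hPQ b (by simp [hba]) (by simp) with h | h <;> contradiction
  · rcases hQR b (by simp) (by simp [hby]) with h | h <;> contradiction
  · rcases hQR b (by simp) (by simp [hby, T.end_mem_support]) with h | h <;> contradiction

theorem not_paintableIn_three_of_frame [Fintype V] {u v a b y₁ y₂ : V} (T : G.Walk y₁ y₂)
    (hua : G.Adj u a) (hav : G.Adj a v) (hub : G.Adj u b) (hbv : G.Adj b v) (huy : G.Adj u y₁)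
    (hyv : G.Adj y₂ v) (hb : b ∉ ({u, v, a, y₁, y₂} : Finset V)) (huv : u ≠ v) (hy : y₁ ≠ y₂)
    (hT : Even T.length) (huT : u ∉ T.support) (hvT : v ∉ T.support) :
    ¬ PaintableIn G (fun _ => 2) 3 := by
  intro h
  obtain ⟨X, hXM, hX, h2⟩ := h {u, v, a, y₁, y₂} (by simp) (by simp)
  rw [Finset.inter_univ] at hXM
  have hWX {x y : V} (W : G.Walk x y) (hW : ∀ w ∈ W.support, w ∉ X) :
      ∀ w ∈ W.support, w ∈ Finset.univ \ X := by simpa using hW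
  by_cases hu : u ∈ X <;> by_cases hv : v ∈ X
  · have hXuv : ∀ w ∈ X, w = u ∨ w = v := fun w hw => by
      have := hXM hw
      simp only [Finset.mem_insert, Finset.mem_singleton] at this
      rcases this with rfl | rfl | rfl | rfl | rfl
      · exact Or.inl rfl
      · exact Or.inr rfl
      · exact absurd hua (hX u hu w hw)
      · exact absurd huy (hX u hu w hw)
      · exact absurd hyv (hX w hw v hv)
    refine not_paintFromIn_two_of_walk hb (by simp) (by simp) T (hWX T fun w hw hwX => ?_)
      (fun _ => hy) h2
    rcases hXuv w hwX with rfl | rfl <;> contradiction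
  · have ha : a ∉ X := fun ha => hX u hu a ha hua
    exact not_paintFromIn_two_of_walk hb (by simp) (by simp) hav.toWalk
      (hWX _ (by simp [ha, hv])) (by simp) h2
  · have ha : a ∉ X := fun ha => hX a ha v hv hav
    exact not_paintFromIn_two_of_walk hb (by simp) (by simp) hua.symm.toWalk
      (hWX _ (by simp [ha, hu])) (by simp) h2
  · have hbX : b ∉ X := fun hbX => hb (hXM hbX)
    exact not_paintFromIn_two_of_walk hb (by simp) (by simp) (.cons hub hbv.toWalk)
      (hWX _ (by simp [hu, hbX, hv])) (fun _ => huv) h2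

theorem mval_eq_of_not_paintableIn [Fintype V] {f : V → ℕ} {t : ℕ} (ht : ∀ v, f v ≤ t)
    (hnot : ¬ PaintableIn G f t) (hlt : ∀ s < t, (∀ v, f v ≤ s) → PaintableIn G f s) :
    mval G f = t :=
  le_antisymm (Nat.sInf_le ⟨ht, hnot⟩) (le_csInf ⟨t, ht, hnot⟩ fun s ⟨hs, hsnot⟩ =>
    not_lt.mp fun hst => hsnot (hlt s hst hs))

end PaintGame

/-- Lemma `theta3`.  If `G` is a bipartite graph that contains a
subgraph `θ_{2,2,2n}` with `n ≥ 2`, then `m(G) = 3`. -/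
theorem mval_eq_three_of_theta22even {V : Type} [Fintype V] [DecidableEq V]
    (G : SimpleGraph V) (hbip : G.Colorable 2) (n : ℕ) (hn : 2 ≤ n)
    (hθ : PaintGame.HasTheta G 2 2 (2 * n)) :
    PaintGame.mval G (fun _ => 2) = 3 := by
  obtain ⟨u, v, a, b, y₁, y₂, T, hua, hav, hub, hbv, huy, hyv, hb, huv, hy, hT, huT, hvT⟩ :=
    hθ.exists_frame hn
  refine mval_eq_of_not_paintableIn (fun _ => by omega)
    (not_paintableIn_three_of_frame T hua hav hub hbv huy hyv hb huv hy hT huT hvT)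
    fun s hs h2s => ?_
  obtain rfl : s = 2 := by have := h2s u; omega
  exact paintableIn_of_colorable hbip
end
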